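/- arXiv:0901.0264 — 10 statements merged into one kernel-verified Lean document; each statement's English description precedes it below -/
import Mathlib

section
/- Let F belong to the class Γ₀ with auxiliary function ρ. Then ρ(s)/s → 0 as s → 0⁺. -/
open Filter Set Real

/-- `F` belongs to the class `Γ₀` with auxiliary function `ρ` :
`F` is nonnegative, vanishes on `(-∞,0]`, is nondecreasing, right-continuous,
`F 0 = 0`, `F s > 0` for `s > 0`; `ρ` is continuous, nondecreasing and nonnegative
on a right-neighborhood of `0` with `ρ 0 = 0`; and for every `x : ℝ`,
`F (s + x * ρ s) / F s → exp x` as `s → 0⁺`. -/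
def MemGamma0 (F ρ : ℝ → ℝ) : Prop :=
  (∀ s, 0 ≤ F s) ∧
  (∀ s ≤ (0 : ℝ), F s = 0) ∧
  Monotone F ∧
  (∀ s, ContinuousWithinAt F (Set.Ici s) s) ∧
  F 0 = 0 ∧
  (∀ s > (0 : ℝ), 0 < F s) ∧
  (∃ δ > (0 : ℝ), ContinuousOn ρ (Set.Ico 0 δ) ∧ MonotoneOn ρ (Set.Ico 0 δ) ∧
    ∀ s ∈ Set.Ico (0 : ℝ) δ, 0 ≤ ρ s) ∧
  ρ 0 = 0 ∧
  (∀ x : ℝ, Tendsto (fun s => F (s + x * ρ s) / F s) (nhdsWithin 0 (Set.Ioi 0))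
    (nhds (Real.exp x)))

/-- If `F ∈ Γ₀` with auxiliary function `ρ`, then `ρ s / s → 0` as `s → 0⁺`. -/
theorem gamma0_auxiliary_div_self_tendsto_zero (F ρ : ℝ → ℝ) (h : MemGamma0 F ρ) :
    Tendsto (fun s => ρ s / s) (nhdsWithin 0 (Set.Ioi 0)) (nhds 0) := by
  obtain ⟨hF0, hFle, hFmono, hFrc, hF00, hFpos, ⟨δ, hδ, hρc, hρm, hρnn⟩, hρ0, hlim⟩ := h
  rw [NormedAddCommGroup.tendsto_nhds_zero]
  intro ε hε
  set x : ℝ := -(1/ε) with hxdef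
  have h1 : ∀ᶠ s in nhdsWithin (0:ℝ) (Set.Ioi 0),
      0 < F (s + x * ρ s) / F s :=
    (hlim x).eventually (eventually_gt_nhds (Real.exp_pos x))
  have h2 : Set.Ioo (0:ℝ) δ ∈ nhdsWithin (0:ℝ) (Set.Ioi 0) :=
    Ioo_mem_nhdsGT_of_mem ⟨le_refl 0, hδ⟩
  filter_upwards [h1, h2] with s hq hs
  obtain ⟨hs0, hsδ⟩ := hs
  have hFs : 0 < F s := hFpos s hs0
  have hnum : 0 < F (s + x * ρ s) := by
    by_contra hc
    push_neg at hc
    have : F (s + x * ρ s) = 0 := le_antisymm hc (hF0 _)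
    rw [this, zero_div] at hq
    exact lt_irrefl 0 hq
  have hpos : 0 < s + x * ρ s := by
    by_contra hc
    push_neg at hc
    have := hFle _ hc
    rw [this] at hnum
    exact lt_irrefl 0 hnum
  have hρs : 0 ≤ ρ s := hρnn s ⟨hs0.le, hsδ⟩
  have hlt : ρ s / s < ε := by
    rw [div_lt_iff₀ hs0]
    have hx' : s + x * ρ s = s - ρ s / ε := by rw [hxdef]; ring
    rw [hx'] at hpos
    have h3 : ρ s / ε < s := by linarith
    have h4 : ε * (ρ s / ε) < ε * s := mul_lt_mul_of_pos_left h3 hε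
    have h5 : ε * (ρ s / ε) = ρ s := by field_simp
    linarith
  have hnn : 0 ≤ ρ s / s := div_nonneg hρs hs0.le
  rw [Real.norm_eq_abs, abs_of_nonneg hnn]
  exact hlt
end

section
/- Let F belong to the class Γ₀ with auxiliary function ρ. Then ρ is self-neglecting at 0, that is, ρ(s + x·ρ(s))/ρ(s) → 1 as s → 0⁺, locally uniformly in x ∈ ℝ. -/
open Filter Set Real

namespace Gamma0Aux

variable {F ρ : ℝ → ℝ}

/-- `ρ s → 0` as `s → 0⁺`. -/
lemma rho_tendsto (h : MemGamma0 F ρ) :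
    Tendsto ρ (nhdsWithin 0 (Set.Ioi 0)) (nhds 0) := by
  obtain ⟨-, -, -, -, -, -, ⟨δ, hδ, hρcont, -, -⟩, hρ0, -⟩ := h
  have hmem : Set.Ico (0:ℝ) δ ∈ nhdsWithin (0:ℝ) (Set.Ioi 0) :=
    mem_of_superset (Ioo_mem_nhdsGT_of_mem ⟨le_refl 0, hδ⟩) Ioo_subset_Ico_self
  have hle : nhdsWithin (0:ℝ) (Set.Ioi 0) ≤ nhdsWithin 0 (Set.Ico 0 δ) :=
    nhdsWithin_le_iff.mpr hmem
  have := (hρcont 0 ⟨le_refl 0, hδ⟩).tendsto.mono_left hle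
  rwa [hρ0] at this

/-- eventually `C * ρ s < s`. -/
lemma rho_small (h : MemGamma0 F ρ) (C : ℝ) :
    ∀ᶠ s in nhdsWithin 0 (Set.Ioi 0), C * ρ s < s := by
  obtain ⟨hF0, hFneg, hFmono, -, -, hFpos, ⟨δ, hδ, -, -, hρnn0⟩, -, hlim⟩ := h
  have h1 : ∀ᶠ s in nhdsWithin (0:ℝ) (Set.Ioi 0),
      0 < F (s + (-(|C|+1)) * ρ s) / F s :=
    (hlim (-(|C|+1))).eventually_const_lt (exp_pos _)
  have h2 : ∀ᶠ s in nhdsWithin (0:ℝ) (Set.Ioi 0), (0:ℝ) < s :=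
    eventually_mem_nhdsWithin
  have h3 : ∀ᶠ s in nhdsWithin (0:ℝ) (Set.Ioi 0), 0 ≤ ρ s := by
    filter_upwards [Ioo_mem_nhdsGT_of_mem ⟨le_refl (0:ℝ), hδ⟩] with s hs
    exact hρnn0 s ⟨hs.1.le, hs.2⟩
  filter_upwards [h1, h2, h3] with s hs hspos hρnn
  have hFs : 0 < F s := hFpos s hspos
  have hnum : 0 < F (s + (-(|C|+1)) * ρ s) := by
    by_contra hc
    push_neg at hc
    have h3 := hF0 (s + (-(|C|+1)) * ρ s)
    have h4 : F (s + (-(|C|+1)) * ρ s) = 0 := le_antisymm hc h3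
    rw [h4, zero_div] at hs
    exact lt_irrefl 0 hs
  have hpos : 0 < s + (-(|C|+1)) * ρ s := by
    by_contra hc
    push_neg at hc
    have := hFneg _ hc
    rw [this] at hnum
    exact lt_irrefl 0 hnum
  nlinarith [le_abs_self C, mul_le_mul_of_nonneg_right (le_abs_self C) hρnn,
    mul_le_mul_of_nonneg_right (neg_abs_le C) hρnn]

/-- eventually `0 < ρ s`. -/
lemma rho_pos (h : MemGamma0 F ρ) :
    ∀ᶠ s in nhdsWithin 0 (Set.Ioi 0), 0 < ρ s := by
  obtain ⟨hF0, hFneg, hFmono, -, -, hFpos, ⟨δ, hδ, -, -, hρnn⟩, hρ0, hlim⟩ := h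
  by_contra hcon
  rw [Filter.not_eventually] at hcon
  have hnn : ∀ᶠ s in nhdsWithin (0:ℝ) (Set.Ioi 0), 0 ≤ ρ s := by
    filter_upwards [Ioo_mem_nhdsGT_of_mem ⟨le_refl (0:ℝ), hδ⟩] with s hs
    exact hρnn s ⟨hs.1.le, hs.2⟩
  have hfreq : ∃ᶠ s in nhdsWithin (0:ℝ) (Set.Ioi 0), ρ s = 0 := by
    refine (hcon.and_eventually hnn).mono ?_
    rintro s ⟨h1, h2⟩
    push_neg at h1
    exact le_antisymm h1 h2
  have hNB : NeBot (nhdsWithin (0:ℝ) (Set.Ioi 0) ⊓ Filter.principal {s | ρ s = 0}) :=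
    Filter.frequently_iff_neBot.mp hfreq
  set l' := nhdsWithin (0:ℝ) (Set.Ioi 0) ⊓ Filter.principal {s | ρ s = 0} with hl'
  have h1 : Tendsto (fun s => F (s + 1 * ρ s) / F s) l' (nhds (exp 1)) :=
    (hlim 1).mono_left inf_le_left
  have h2 : Tendsto (fun s => F (s + 1 * ρ s) / F s) l' (nhds 1) := by
    have hev : ∀ᶠ s in l', F (s + 1 * ρ s) / F s = 1 := by
      have hz : ∀ᶠ s in l', ρ s = 0 :=
        (Filter.eventually_inf_principal).mpr (Filter.Eventually.of_forall fun s hs => hs)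
      have hsp : ∀ᶠ s in l', (0:ℝ) < s :=
        (eventually_mem_nhdsWithin).filter_mono inf_le_left
      filter_upwards [hz, hsp] with s hs hsp
      rw [hs]
      simp only [mul_zero, add_zero]
      exact div_self (ne_of_gt (hFpos s hsp))
    exact Tendsto.congr' (hev.mono fun s hs => hs.symm) tendsto_const_nhds
  have huniq := tendsto_nhds_unique h1 h2
  have hlt : (1:ℝ) < exp 1 := by
    have := Real.add_one_lt_exp (x := 1) one_ne_zero
    linarith
  linarith

/-- Key upper bound: eventually `ρ (s + c * ρ s) ≤ (1 + ε) * ρ s`. -/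
lemma key_upper (h : MemGamma0 F ρ) (c ε : ℝ) (hε : 0 < ε) :
    ∀ᶠ s in nhdsWithin 0 (Set.Ioi 0), ρ (s + c * ρ s) ≤ (1 + ε) * ρ s := by
  have hsm := rho_small h (|c|+1)
  have hρ0 := rho_tendsto h
  have hρp := rho_pos h
  obtain ⟨hF0, hFneg, hFmono, -, -, hFpos, -, -, hlim⟩ := h
  by_contra hcon
  rw [Filter.not_eventually] at hcon
  have hfreq : ∃ᶠ s in nhdsWithin (0:ℝ) (Set.Ioi 0),
      (1 + ε) * ρ s < ρ (s + c * ρ s) := by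
    refine hcon.mono fun s hs => ?_
    push_neg at hs
    exact hs
  have hNB : NeBot (nhdsWithin (0:ℝ) (Set.Ioi 0) ⊓
      Filter.principal {s | (1 + ε) * ρ s < ρ (s + c * ρ s)}) :=
    Filter.frequently_iff_neBot.mp hfreq
  set l' := nhdsWithin (0:ℝ) (Set.Ioi 0) ⊓
      Filter.principal {s | (1 + ε) * ρ s < ρ (s + c * ρ s)} with hl'
  have hle : l' ≤ nhdsWithin (0:ℝ) (Set.Ioi 0) := inf_le_left
  have hbig : ∀ᶠ s in l', (1 + ε) * ρ s < ρ (s + c * ρ s) :=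
    (Filter.eventually_inf_principal).mpr (Filter.Eventually.of_forall fun s hs => hs)
  have hsp : ∀ᶠ s in l', (0:ℝ) < s := (eventually_mem_nhdsWithin).filter_mono hle
  have hsm' : ∀ᶠ s in l', (|c|+1) * ρ s < s := hsm.filter_mono hle
  have hρnn : ∀ᶠ s in l', 0 ≤ ρ s := (hρp.filter_mono hle).mono fun s hs => hs.le
  have htpos : ∀ᶠ s in l', 0 < s + c * ρ s := by
    filter_upwards [hsp, hsm', hρnn] with s h1 h2 h3
    nlinarith [neg_abs_le c, mul_le_mul_of_nonneg_right (neg_abs_le c) h3]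
  have httend : Tendsto (fun s => s + c * ρ s) l' (nhdsWithin 0 (Set.Ioi 0)) := by
    rw [tendsto_nhdsWithin_iff]
    constructor
    · have h1 : Tendsto (fun s : ℝ => s) l' (nhds 0) :=
        tendsto_id.mono_left (hle.trans nhdsWithin_le_nhds)
      have h2 : Tendsto ρ l' (nhds 0) := hρ0.mono_left hle
      have := h1.add ((h2.const_mul c))
      simpa using this
    · exact htpos.mono fun s hs => hs
  have hA : Tendsto (fun s => F ((s + c * ρ s) + 1 * ρ (s + c * ρ s)) / F (s + c * ρ s))
      l' (nhds (exp 1)) := (hlim 1).comp httend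
  have hB : Tendsto (fun s => (F (s + (c + (1 + ε)) * ρ s) / F s) *
      (F (s + c * ρ s) / F s)⁻¹) l' (nhds (exp (c + (1 + ε)) * (exp c)⁻¹)) :=
    ((hlim (c + (1 + ε))).mono_left hle).mul
      (((hlim c).mono_left hle).inv₀ (exp_ne_zero c))
  have hcomp : ∀ᶠ s in l', (F (s + (c + (1 + ε)) * ρ s) / F s) *
      (F (s + c * ρ s) / F s)⁻¹ ≤
      F ((s + c * ρ s) + 1 * ρ (s + c * ρ s)) / F (s + c * ρ s) := by
    filter_upwards [hbig, hsp, htpos] with s h1 h2 h3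
    have hFs : 0 < F s := hFpos s h2
    have hFt : 0 < F (s + c * ρ s) := hFpos _ h3
    have heq : (F (s + (c + (1 + ε)) * ρ s) / F s) * (F (s + c * ρ s) / F s)⁻¹ =
        F (s + (c + (1 + ε)) * ρ s) / F (s + c * ρ s) := by
      field_simp
    rw [heq]
    rw [div_le_div_iff₀ hFt hFt]
    have hm : F (s + (c + (1 + ε)) * ρ s) ≤ F ((s + c * ρ s) + 1 * ρ (s + c * ρ s)) :=
      hFmono (by nlinarith)
    nlinarith
  have hfin := le_of_tendsto_of_tendsto hB hA hcomp
  have hfin2 : exp (1 + ε) ≤ exp 1 := by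
    have heq : exp (c + (1 + ε)) * (exp c)⁻¹ = exp (1 + ε) := by
      rw [← Real.exp_neg, ← Real.exp_add]
      ring_nf
    rwa [heq] at hfin
  have := Real.exp_le_exp.mp hfin2
  linarith

/-- Key lower bound: eventually `(1 - ε) * ρ s ≤ ρ (s + c * ρ s)`. -/
lemma key_lower (h : MemGamma0 F ρ) (c ε : ℝ) (hε : 0 < ε) (hε1 : ε < 1) :
    ∀ᶠ s in nhdsWithin 0 (Set.Ioi 0), (1 - ε) * ρ s ≤ ρ (s + c * ρ s) := by
  have hsm := rho_small h (|c|+1)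
  have hρ0 := rho_tendsto h
  have hρp := rho_pos h
  obtain ⟨hF0, hFneg, hFmono, -, -, hFpos, -, -, hlim⟩ := h
  by_contra hcon
  rw [Filter.not_eventually] at hcon
  have hfreq : ∃ᶠ s in nhdsWithin (0:ℝ) (Set.Ioi 0),
      ρ (s + c * ρ s) < (1 - ε) * ρ s := by
    refine hcon.mono fun s hs => ?_
    push_neg at hs
    exact hs
  have hNB : NeBot (nhdsWithin (0:ℝ) (Set.Ioi 0) ⊓
      Filter.principal {s | ρ (s + c * ρ s) < (1 - ε) * ρ s}) :=
    Filter.frequently_iff_neBot.mp hfreq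
  set l' := nhdsWithin (0:ℝ) (Set.Ioi 0) ⊓
      Filter.principal {s | ρ (s + c * ρ s) < (1 - ε) * ρ s} with hl'
  have hle : l' ≤ nhdsWithin (0:ℝ) (Set.Ioi 0) := inf_le_left
  have hbig : ∀ᶠ s in l', ρ (s + c * ρ s) < (1 - ε) * ρ s :=
    (Filter.eventually_inf_principal).mpr (Filter.Eventually.of_forall fun s hs => hs)
  have hsp : ∀ᶠ s in l', (0:ℝ) < s := (eventually_mem_nhdsWithin).filter_mono hle
  have hsm' : ∀ᶠ s in l', (|c|+1) * ρ s < s := hsm.filter_mono hle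
  have hρnn : ∀ᶠ s in l', 0 ≤ ρ s := (hρp.filter_mono hle).mono fun s hs => hs.le
  have htpos : ∀ᶠ s in l', 0 < s + c * ρ s := by
    filter_upwards [hsp, hsm', hρnn] with s h1 h2 h3
    nlinarith [neg_abs_le c, mul_le_mul_of_nonneg_right (neg_abs_le c) h3]
  have httend : Tendsto (fun s => s + c * ρ s) l' (nhdsWithin 0 (Set.Ioi 0)) := by
    rw [tendsto_nhdsWithin_iff]
    constructor
    · have h1 : Tendsto (fun s : ℝ => s) l' (nhds 0) :=
        tendsto_id.mono_left (hle.trans nhdsWithin_le_nhds)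
      have h2 : Tendsto ρ l' (nhds 0) := hρ0.mono_left hle
      have := h1.add ((h2.const_mul c))
      simpa using this
    · exact htpos.mono fun s hs => hs
  have hA : Tendsto (fun s => F ((s + c * ρ s) + 1 * ρ (s + c * ρ s)) / F (s + c * ρ s))
      l' (nhds (exp 1)) := (hlim 1).comp httend
  have hB : Tendsto (fun s => (F (s + (c + (1 - ε)) * ρ s) / F s) *
      (F (s + c * ρ s) / F s)⁻¹) l' (nhds (exp (c + (1 - ε)) * (exp c)⁻¹)) :=
    ((hlim (c + (1 - ε))).mono_left hle).mul
      (((hlim c).mono_left hle).inv₀ (exp_ne_zero c))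
  have hcomp : ∀ᶠ s in l',
      F ((s + c * ρ s) + 1 * ρ (s + c * ρ s)) / F (s + c * ρ s) ≤
      (F (s + (c + (1 - ε)) * ρ s) / F s) * (F (s + c * ρ s) / F s)⁻¹ := by
    filter_upwards [hbig, hsp, htpos] with s h1 h2 h3
    have hFs : 0 < F s := hFpos s h2
    have hFt : 0 < F (s + c * ρ s) := hFpos _ h3
    have heq : (F (s + (c + (1 - ε)) * ρ s) / F s) * (F (s + c * ρ s) / F s)⁻¹ =
        F (s + (c + (1 - ε)) * ρ s) / F (s + c * ρ s) := by
      field_simp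
    rw [heq, div_le_div_iff₀ hFt hFt]
    have hm : F ((s + c * ρ s) + 1 * ρ (s + c * ρ s)) ≤ F (s + (c + (1 - ε)) * ρ s) :=
      hFmono (by nlinarith)
    nlinarith
  have hfin := le_of_tendsto_of_tendsto hA hB hcomp
  have hfin2 : exp 1 ≤ exp (1 - ε) := by
    have heq : exp (c + (1 - ε)) * (exp c)⁻¹ = exp (1 - ε) := by
      rw [← Real.exp_neg, ← Real.exp_add]
      ring_nf
    rwa [heq] at hfin
  have := Real.exp_le_exp.mp hfin2
  linarith

end Gamma0Aux

/-- If `F ∈ Γ₀` with auxiliary function `ρ`, then `ρ` is self-neglecting at `0` :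
`ρ (s + x * ρ s) / ρ s → 1` as `s → 0⁺`, locally uniformly in `x ∈ ℝ`. -/
theorem gamma0_auxiliary_selfNeglecting (F ρ : ℝ → ℝ) (h : MemGamma0 F ρ) :
    TendstoLocallyUniformly (fun s x => ρ (s + x * ρ s) / ρ s) (fun _ => (1 : ℝ))
      (nhdsWithin 0 (Set.Ioi 0)) := by
  obtain ⟨δ, hδ, -, hρmono, hρnn⟩ := h.2.2.2.2.2.2.1
  rw [Metric.tendstoLocallyUniformly_iff]
  intro ε hε x
  refine ⟨Set.Ioo (x-1) (x+1), Ioo_mem_nhds (by linarith) (by linarith), ?_⟩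
  set M := |x| + 1 with hM
  have hMpos : 0 < M := by positivity
  set ε' := min (ε/2) (1/2) with hε'
  have hε'pos : 0 < ε' := lt_min (by linarith) one_half_pos
  have hε'lt : ε' < 1 := lt_of_le_of_lt (min_le_right _ _) (by norm_num)
  have hε'le : ε' ≤ ε/2 := min_le_left _ _
  have h1 := Gamma0Aux.key_upper h M ε' hε'pos
  have h2 := Gamma0Aux.key_lower h (-M) ε' hε'pos hε'lt
  have h3 := Gamma0Aux.rho_pos h
  have h4 := Gamma0Aux.rho_small h (M+1)
  have h5 : ∀ᶠ s in nhdsWithin (0:ℝ) (Set.Ioi 0), s < δ/2 := by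
    filter_upwards [Ioo_mem_nhdsGT_of_mem ⟨le_refl (0:ℝ), half_pos hδ⟩] with s hs
    exact hs.2
  filter_upwards [h1, h2, h3, h4, h5, eventually_mem_nhdsWithin]
    with s hu hl hρs hsm hsδ hsp
  intro y hy
  have hsp : (0:ℝ) < s := hsp
  have hy1 : -M ≤ y := by
    have := neg_abs_le x
    have := hy.1
    simp only [hM]
    linarith
  have hy2 : y ≤ M := by
    have := le_abs_self x
    have := hy.2
    simp only [hM]
    linarith
  have hρsnn : 0 ≤ ρ s := hρs.le
  have hmemu : s + y * ρ s ∈ Set.Ico 0 δ := by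
    constructor
    · nlinarith [mul_le_mul_of_nonneg_right hy1 hρsnn]
    · nlinarith [mul_le_mul_of_nonneg_right hy2 hρsnn]
  have hmema : s + (-M) * ρ s ∈ Set.Ico 0 δ := by
    constructor
    · nlinarith
    · nlinarith
  have hmemb : s + M * ρ s ∈ Set.Ico 0 δ := by
    constructor
    · nlinarith
    · nlinarith
  have hab : ρ (s + (-M) * ρ s) ≤ ρ (s + y * ρ s) :=
    hρmono hmema hmemu (by nlinarith [mul_le_mul_of_nonneg_right hy1 hρsnn])
  have hub : ρ (s + y * ρ s) ≤ ρ (s + M * ρ s) :=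
    hρmono hmemu hmemb (by nlinarith [mul_le_mul_of_nonneg_right hy2 hρsnn])
  have hup : ρ (s + y * ρ s) ≤ (1 + ε') * ρ s := hub.trans hu
  have hlo : (1 - ε') * ρ s ≤ ρ (s + y * ρ s) := hl.trans hab
  have hr1 : ρ (s + y * ρ s) / ρ s ≤ 1 + ε' := by
    rw [div_le_iff₀ hρs]
    linarith
  have hr2 : 1 - ε' ≤ ρ (s + y * ρ s) / ρ s := by
    rw [le_div_iff₀ hρs]
    linarith
  simp only [Real.dist_eq]
  rw [abs_sub_lt_iff]
  constructor <;> linarith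
end

section
/- Let F belong to the class Γ₀ with auxiliary function ρ. Then the auxiliary function is unique up to asymptotic equivalence at 0: the function ρ̃(s) = (∫₀^s F(t) dt)/F(s) satisfies ρ̃(s)/ρ(s) → 1 as s → 0⁺, and ρ̃ is itself an auxiliary function for F (i.e. F(s + x·ρ̃(s))/F(s) → exp(x) as s → 0⁺ for every x ∈ ℝ). -/
set_option maxHeartbeats 1000000


open Filter Set Real Topology

private lemma ev_small {F ρ : ℝ → ℝ} (hFneg : ∀ s ≤ (0:ℝ), F s = 0)
    (hFpos : ∀ s > (0:ℝ), 0 < F s)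
    (hlim : ∀ x : ℝ, Tendsto (fun s => F (s + x * ρ s) / F s) (nhdsWithin 0 (Set.Ioi 0))
      (nhds (Real.exp x)))
    {K : ℝ} (hK : 0 < K) :
    ∀ᶠ s in nhdsWithin (0:ℝ) (Set.Ioi 0), ρ s ≤ s / (2 * K) := by
  have h1 := (hlim (-(2*K))).eventually_const_lt (exp_pos (-(2*K)))
  filter_upwards [h1, self_mem_nhdsWithin] with s hs hs0
  have hs0' : (0:ℝ) < s := hs0
  have hFs : 0 < F s := hFpos s hs0'
  have hnum : 0 < F (s + -(2*K) * ρ s) := by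
    by_contra hcon
    push_neg at hcon
    have := div_nonpos_of_nonpos_of_nonneg hcon hFs.le
    linarith
  have harg : 0 < s + -(2*K) * ρ s := by
    by_contra hcon
    push_neg at hcon
    rw [hFneg _ hcon] at hnum
    exact lt_irrefl 0 hnum
  rw [le_div_iff₀ (by positivity)]
  linarith

private lemma int_le_of_monotone {F : ℝ → ℝ} (hm : Monotone F) {a b : ℝ} (hab : a ≤ b) :
    (∫ t in a..b, F t) ≤ (b - a) * F b := by
  have h := intervalIntegral.integral_mono_on (μ := MeasureTheory.volume) hab
    hm.intervalIntegrable intervalIntegrable_const (fun t ht => hm ht.2)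
  simpa [intervalIntegral.integral_const, smul_eq_mul] using h

private lemma telescope_int (F : ℝ → ℝ) (hm : Monotone F) (a : ℕ → ℝ) (n : ℕ) :
    (∫ t in (0:ℝ)..(a 0), F t) =
      (∫ t in (0:ℝ)..(a n), F t) + ∑ k ∈ Finset.range n, ∫ t in (a (k+1))..(a k), F t := by
  induction n with
  | zero => simp
  | succ n ih =>
    rw [ih, Finset.sum_range_succ]
    have h := intervalIntegral.integral_add_adjacent_intervals
      (a := (0:ℝ)) (b := a (n+1)) (c := a n) (μ := MeasureTheory.volume)
      hm.intervalIntegrable hm.intervalIntegrable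
    linarith [h]

private lemma geom_partial_le {c : ℝ} (hc0 : 0 ≤ c) (hc1 : c < 1) (n : ℕ) :
    (∑ k ∈ Finset.range n, c ^ k) ≤ 1 / (1 - c) := by
  have h := geom_sum_mul c n
  have hpow : 0 ≤ c ^ n := pow_nonneg hc0 n
  rw [le_div_iff₀ (by linarith)]
  have h2 : (∑ k ∈ Finset.range n, c ^ k) * (1 - c) = 1 - c ^ n := by linear_combination -h
  linarith

private lemma chain_bound {F ρ : ℝ → ℝ} (hm : Monotone F) (hFnn : ∀ u, 0 ≤ F u)
    {M c ε₀ : ℝ} (hM : 0 < M) (hc0 : 0 ≤ c) (hc1 : c < 1)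
    (hρmono : MonotoneOn ρ (Set.Ico 0 ε₀)) (hρnn : ∀ u ∈ Set.Ico (0:ℝ) ε₀, 0 ≤ ρ u)
    (hstep : ∀ u ∈ Set.Ioo (0:ℝ) ε₀, F (u - M * ρ u) ≤ c * F u)
    (hsmall : ∀ u ∈ Set.Ioo (0:ℝ) ε₀, ρ u ≤ u / (2 * M))
    {s : ℝ} (hs : s ∈ Set.Ioo (0:ℝ) ε₀) :
    (∫ t in (0:ℝ)..s, F t) ≤ (M / (1 - c)) * (ρ s * F s) := by
  set a : ℕ → ℝ := fun n => Nat.rec s (fun _ u => u - M * ρ u) n with ha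
  have ha0 : a 0 = s := rfl
  have haS : ∀ n, a (n+1) = a n - M * ρ (a n) := fun n => rfl
  -- invariant
  have hinv : ∀ n, 0 < a n ∧ a n ≤ s := by
    intro n; induction n with
    | zero => exact ⟨hs.1, le_refl s⟩
    | succ n ih =>
      have hmem : a n ∈ Set.Ioo (0:ℝ) ε₀ := ⟨ih.1, lt_of_le_of_lt ih.2 hs.2⟩
      have h1 : ρ (a n) ≤ a n / (2*M) := hsmall _ hmem
      have h2 : 0 ≤ ρ (a n) := hρnn _ ⟨le_of_lt ih.1, hmem.2⟩
      have h3 : M * ρ (a n) ≤ a n / 2 := by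
        calc M * ρ (a n) ≤ M * (a n / (2*M)) := mul_le_mul_of_nonneg_left h1 hM.le
          _ = a n / 2 := by field_simp
      have h4 : 0 ≤ M * ρ (a n) := mul_nonneg hM.le h2
      constructor
      · rw [haS]; linarith [ih.1]
      · rw [haS]; linarith [ih.2]
  have hmem : ∀ n, a n ∈ Set.Ioo (0:ℝ) ε₀ :=
    fun n => ⟨(hinv n).1, lt_of_le_of_lt (hinv n).2 hs.2⟩
  -- F decay
  have hFpow : ∀ n, F (a n) ≤ c ^ n * F s := by
    intro n; induction n with
    | zero => simp [ha0]
    | succ n ih =>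
      have := hstep _ (hmem n)
      rw [haS]
      calc F (a n - M * ρ (a n)) ≤ c * F (a n) := this
        _ ≤ c * (c ^ n * F s) := mul_le_mul_of_nonneg_left ih hc0
        _ = c ^ (n+1) * F s := by ring
  -- pieces
  have hρle : ∀ n, ρ (a n) ≤ ρ s := fun n =>
    hρmono ⟨(hinv n).1.le, (hmem n).2⟩ ⟨hs.1.le, hs.2⟩ (hinv n).2
  have hρnn' : ∀ n, 0 ≤ ρ (a n) := fun n => hρnn _ ⟨(hinv n).1.le, (hmem n).2⟩
  have hpiece : ∀ n, (∫ t in (a (n+1))..(a n), F t) ≤ M * (ρ s * F s) * c ^ n := by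
    intro n
    have hle : a (n+1) ≤ a n := by
      rw [haS]; nlinarith [mul_nonneg hM.le (hρnn' n)]
    calc (∫ t in (a (n+1))..(a n), F t) ≤ (a n - a (n+1)) * F (a n) :=
          int_le_of_monotone hm hle
      _ = M * ρ (a n) * F (a n) := by rw [haS]; ring
      _ ≤ M * ρ s * (c ^ n * F s) := by
          apply mul_le_mul (mul_le_mul_of_nonneg_left (hρle n) hM.le) (hFpow n)
            (hFnn _) (mul_nonneg hM.le (hρnn s ⟨hs.1.le, hs.2⟩))
      _ = M * (ρ s * F s) * c ^ n := by ring
  -- tail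
  have htail : ∀ n, (∫ t in (0:ℝ)..(a n), F t) ≤ s * F s * c ^ n := by
    intro n
    calc (∫ t in (0:ℝ)..(a n), F t) ≤ (a n - 0) * F (a n) :=
          int_le_of_monotone hm (hinv n).1.le
      _ ≤ s * (c ^ n * F s) := by
          apply mul_le_mul (by linarith [(hinv n).2]) (hFpow n) (hFnn _)
            hs.1.le
      _ = s * F s * c ^ n := by ring
  -- combine
  have hbound : ∀ n, (∫ t in (0:ℝ)..s, F t) ≤
      M / (1 - c) * (ρ s * F s) + s * F s * c ^ n := by
    intro n
    have ht := telescope_int F hm a n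
    rw [ha0] at ht
    have hsum : (∑ k ∈ Finset.range n, ∫ t in (a (k+1))..(a k), F t) ≤
        M * (ρ s * F s) * ∑ k ∈ Finset.range n, c ^ k := by
      rw [Finset.mul_sum]
      exact Finset.sum_le_sum fun k _ => hpiece k
    have hgeom : M * (ρ s * F s) * (∑ k ∈ Finset.range n, c ^ k) ≤
        M * (ρ s * F s) * (1 / (1 - c)) := by
      apply mul_le_mul_of_nonneg_left (geom_partial_le hc0 hc1 n)
      exact mul_nonneg hM.le (mul_nonneg (hρnn s ⟨hs.1.le, hs.2⟩) (hFnn s))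
    have heq : M * (ρ s * F s) * (1 / (1 - c)) = M / (1 - c) * (ρ s * F s) := by
      field_simp
    linarith [htail n, ht, hsum, hgeom, heq.le]
  have hT : Tendsto (fun n : ℕ => M / (1 - c) * (ρ s * F s) + s * F s * c ^ n) atTop
      (𝓝 (M / (1 - c) * (ρ s * F s))) := by
    have h1 := tendsto_pow_atTop_nhds_zero_of_lt_one hc0 hc1
    have h2 := (h1.const_mul (s * F s)).const_add (M / (1 - c) * (ρ s * F s))
    simpa using h2
  exact ge_of_tendsto' hT hbound

private lemma le_int_of_monotone {F : ℝ → ℝ} (hm : Monotone F) {a b : ℝ} (hab : a ≤ b) :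
    (b - a) * F a ≤ ∫ t in a..b, F t := by
  have h := intervalIntegral.integral_mono_on (μ := MeasureTheory.volume) hab
    intervalIntegrable_const hm.intervalIntegrable (fun t ht => hm ht.1)
  simpa [intervalIntegral.integral_const, smul_eq_mul] using h

private lemma lower_sum {w r : ℝ} (hr : 0 ≤ r) (hwr : 1 - r ≤ w) (N : ℕ) :
    r * (1 - r ^ N) ≤ ∑ j ∈ Finset.range N, w * r ^ (j + 1) := by
  induction N with
  | zero => simp
  | succ N ih =>
    rw [Finset.sum_range_succ]
    have h1 : 0 ≤ r ^ (N+1) := pow_nonneg hr _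
    have h2 : (1 - r) * r ^ (N+1) ≤ w * r ^ (N+1) := mul_le_mul_of_nonneg_right hwr h1
    have h3 : r ^ (N+1) = r * r ^ N := by ring
    have h4 : r ^ (N+2) = r * r ^ (N+1) := by ring
    nlinarith [ih]

private lemma cube_bound {e : ℝ} (he : 0 < e) (he1 : e ≤ 1) :
    1 - e ≤ (1 - e/4) * ((1 - e/4) * (1 - e/4)) := by nlinarith [sq_nonneg e, he.le]

private lemma key (F ρ : ℝ → ℝ) (h : MemGamma0 F ρ) {ε : ℝ} (hε : 0 < ε) (hε1 : ε ≤ 1) :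
    ∀ᶠ s in nhdsWithin (0:ℝ) (Set.Ioi 0),
      0 < ρ s ∧ (1 - ε) * ρ s ≤ (∫ t in (0:ℝ)..s, F t) / F s ∧
      (∫ t in (0:ℝ)..s, F t) / F s ≤ (1 + ε) * ρ s := by
  obtain ⟨hFnn, hFneg, hm, -, -, hFpos, ⟨δρ, hδρ, -, hρmono, hρnn⟩, -, hlim⟩ := h
  -- upper constants
  set M := min (1/2 : ℝ) (ε/4) with hMdef
  have hM : 0 < M := lt_min (by norm_num) (by positivity)
  have hM2 : M ≤ 1/2 := min_le_left _ _
  have hM4 : M ≤ ε/4 := min_le_right _ _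
  set c := (1 + M^2) * Real.exp (-M) with hcdef
  have hexp : Real.exp (-M) * (1 + M) ≤ 1 := by
    have h2 : 1 + M ≤ Real.exp M := by linarith [add_one_le_exp M]
    rw [Real.exp_neg]
    rw [inv_mul_le_iff₀ (exp_pos M)]
    linarith
  have hc0 : 0 ≤ c := by positivity
  have h4 : c * (1 + M) ≤ 1 + M^2 := by
    rw [hcdef]
    nlinarith [hexp, exp_pos (-M), sq_nonneg M]
  have hc1 : c < 1 := by nlinarith [h4, hM, hM2]
  have h5 : M * (2 + ε) ≤ ε := by nlinarith [hM4, hM2, hε.le]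
  have hconst : M / (1 - c) ≤ 1 + ε := by
    rw [div_le_iff₀ (by linarith : (0:ℝ) < 1 - c)]
    nlinarith [h4, h5, hM, hε.le, mul_nonneg hε.le hM.le]
  -- eventual step bound
  have hevstep : ∀ᶠ s in nhdsWithin (0:ℝ) (Set.Ioi 0), F (s - M * ρ s) ≤ c * F s := by
    have hlt : Real.exp (-M) < c := by
      rw [hcdef]; nlinarith [mul_pos (mul_pos hM hM) (exp_pos (-M))]
    have h1 := (hlim (-M)).eventually_lt_const hlt
    filter_upwards [h1, self_mem_nhdsWithin] with s hs hs0
    have hFs : 0 < F s := hFpos s hs0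
    have h2 := (div_lt_iff₀ hFs).1 hs
    have harg : s + -M * ρ s = s - M * ρ s := by ring
    rw [harg] at h2
    linarith
  have hevsmall := ev_small hFneg hFpos hlim hM
  have hB := hevstep.and hevsmall
  obtain ⟨ε₁, hε₁pos, hsub⟩ := (nhdsGT_basis (0:ℝ)).eventually_iff.1 hB
  set ε₀ := min ε₁ δρ with hε₀def
  have hε₀ : 0 < ε₀ := lt_min hε₁pos hδρ
  have hρmono' : MonotoneOn ρ (Set.Ico 0 ε₀) :=
    hρmono.mono (Set.Ico_subset_Ico_right (min_le_right _ _))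
  have hρnn' : ∀ u ∈ Set.Ico (0:ℝ) ε₀, 0 ≤ ρ u := fun u hu =>
    hρnn u ⟨hu.1, lt_of_lt_of_le hu.2 (min_le_right _ _)⟩
  have hstep' : ∀ u ∈ Set.Ioo (0:ℝ) ε₀, F (u - M * ρ u) ≤ c * F u := fun u hu =>
    (hsub ⟨hu.1, lt_of_lt_of_le hu.2 (min_le_left _ _)⟩).1
  have hsmall' : ∀ u ∈ Set.Ioo (0:ℝ) ε₀, ρ u ≤ u / (2*M) := fun u hu =>
    (hsub ⟨hu.1, lt_of_lt_of_le hu.2 (min_le_left _ _)⟩).2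
  have hUpper : ∀ᶠ s in nhdsWithin (0:ℝ) (Set.Ioi 0),
      (∫ t in (0:ℝ)..s, F t) ≤ (1 + ε) * (ρ s * F s) := by
    filter_upwards [Ioo_mem_nhdsGT hε₀] with s hsmem
    have hcb := chain_bound hm hFnn hM hc0 hc1 hρmono' hρnn' hstep' hsmall' hsmem
    have hnn : 0 ≤ ρ s * F s := mul_nonneg (hρnn' s ⟨hsmem.1.le, hsmem.2⟩) (hFnn s)
    calc (∫ t in (0:ℝ)..s, F t) ≤ M/(1-c) * (ρ s * F s) := hcb
      _ ≤ (1+ε) * (ρ s * F s) := mul_le_mul_of_nonneg_right hconst hnn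
  -- ρ positive eventually
  have hρpos : ∀ᶠ s in nhdsWithin (0:ℝ) (Set.Ioi 0), 0 < ρ s := by
    filter_upwards [hevstep, self_mem_nhdsWithin, Ioo_mem_nhdsGT hδρ]
      with s h1 h2 h3
    have hFs : 0 < F s := hFpos s h2
    rcases (hρnn s ⟨le_of_lt h3.1, h3.2⟩).eq_or_lt with he | hl
    · exfalso
      rw [← he] at h1
      simp only [mul_zero, sub_zero] at h1
      nlinarith [mul_pos (show (0:ℝ) < 1 - c by linarith) hFs]
    · exact hl
  -- lower part
  set M' := Real.log (4/ε) with hM'def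
  have h4ε : (1:ℝ) < 4/ε := by rw [lt_div_iff₀ hε]; linarith
  have hM' : 0 < M' := Real.log_pos h4ε
  have hexpM' : Real.exp (-M') = ε/4 := by
    rw [Real.exp_neg, hM'def, Real.exp_log (by positivity), inv_div]
  set N := Nat.ceil (4*M'/ε) with hNdef
  have hN0 : 0 < N := Nat.ceil_pos.2 (by positivity)
  have hNR : (0:ℝ) < (N:ℝ) := Nat.cast_pos.2 hN0
  set w := M'/(N:ℝ) with hwdef
  have hw : 0 < w := by positivity
  have hNw : (N:ℝ) * w = M' := by rw [hwdef]; field_simp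
  have hceil : 4*M'/ε ≤ (N:ℝ) := Nat.le_ceil _
  have hwε : w ≤ ε/4 := by
    rw [hwdef, div_le_iff₀ hNR]
    rw [div_le_iff₀ hε] at hceil
    linarith
  set r := Real.exp (-w) with hrdef
  have hr0 : 0 < r := exp_pos _
  have hr1 : r ≤ 1 := Real.exp_le_one_iff.2 (by linarith)
  have h1r : 1 - r ≤ w := by
    have := add_one_le_exp (-w)
    rw [hrdef]; linarith
  have hrlow : 1 - ε/4 ≤ r := by linarith
  have hrN : r ^ N = ε/4 := by
    rw [hrdef, ← Real.exp_nat_mul]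
    rw [show ((N:ℝ) * (-w)) = -M' by rw [← hNw]; ring]
    exact hexpM'
  have hevj : ∀ᶠ s in nhdsWithin (0:ℝ) (Set.Ioi 0),
      ∀ j ∈ Finset.range N, (1 - ε/4) * r^(j+1) * F s ≤ F (s - ((j:ℝ)+1) * w * ρ s) := by
    rw [eventually_all_finset]
    intro j _
    have hxv : Real.exp (-(((j:ℝ)+1)*w)) = r^(j+1) := by
      rw [hrdef, ← Real.exp_nat_mul]
      congr 1
      push_cast
      ring
    have hlt : (1 - ε/4) * r^(j+1) < Real.exp (-(((j:ℝ)+1)*w)) := by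
      rw [hxv]
      nlinarith [pow_pos hr0 (j+1), hε]
    have h1 := (hlim (-(((j:ℝ)+1)*w))).eventually_const_lt hlt
    filter_upwards [h1, self_mem_nhdsWithin] with s hs hs0
    have hFs : 0 < F s := hFpos s hs0
    have h2 := (lt_div_iff₀ hFs).1 hs
    have harg : s + -(((j:ℝ)+1)*w) * ρ s = s - ((j:ℝ)+1)*w*ρ s := by ring
    rw [harg] at h2
    linarith
  have hevsmall' := ev_small hFneg hFpos hlim hM'
  have hLower : ∀ᶠ s in nhdsWithin (0:ℝ) (Set.Ioi 0),
      (1 - ε) * (ρ s * F s) ≤ (∫ t in (0:ℝ)..s, F t) := by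
    filter_upwards [hevj, hevsmall', self_mem_nhdsWithin, Ioo_mem_nhdsGT hδρ]
      with s hj hsm hs0 hsδ
    have hs0' : (0:ℝ) < s := hs0
    have hρs : 0 ≤ ρ s := hρnn s ⟨hs0'.le, hsδ.2⟩
    have hFs : 0 < F s := hFpos s hs0'
    set t : ℕ → ℝ := fun k => s - (k:ℝ) * w * ρ s with htdef
    have htval : ∀ k : ℕ, t k = s - (k:ℝ) * w * ρ s := fun k => rfl
    have ht0 : t 0 = s := by rw [htval]; norm_num
    have htN : 0 ≤ t N := by
      have hMs : M' * ρ s ≤ s/2 := by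
        calc M' * ρ s ≤ M' * (s/(2*M')) := mul_le_mul_of_nonneg_left hsm hM'.le
          _ = s/2 := by field_simp
      have htNe : t N = s - M' * ρ s := by rw [htval, hNw]
      rw [htNe]; linarith
    have htel := telescope_int F hm t N
    rw [ht0] at htel
    have htail : 0 ≤ ∫ u in (0:ℝ)..(t N), F u :=
      intervalIntegral.integral_nonneg htN (fun u _ => hFnn u)
    have hpiece : ∀ k ∈ Finset.range N,
        w * r^(k+1) * ((1 - ε/4) * (ρ s * F s)) ≤ ∫ u in (t (k+1))..(t k), F u := by
      intro k hk
      have hwρ : 0 ≤ w * ρ s := mul_nonneg hw.le hρs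
      have hle : t (k+1) ≤ t k := by
        rw [htval, htval]
        push_cast
        linarith [hwρ]
      have hdiff : t k - t (k+1) = w * ρ s := by
        rw [htval, htval]; push_cast; ring
      have htk1 : t (k+1) = s - ((k:ℝ)+1) * w * ρ s := by
        rw [htval]; push_cast; ring
      have hFtk : (1 - ε/4) * r^(k+1) * F s ≤ F (t (k+1)) := by
        rw [htk1]; exact hj k hk
      calc w * r^(k+1) * ((1 - ε/4) * (ρ s * F s))
          = (w * ρ s) * ((1 - ε/4) * r^(k+1) * F s) := by ring
        _ ≤ (w * ρ s) * F (t (k+1)) := mul_le_mul_of_nonneg_left hFtk hwρ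
        _ = (t k - t (k+1)) * F (t (k+1)) := by rw [hdiff]
        _ ≤ ∫ u in (t (k+1))..(t k), F u := le_int_of_monotone hm hle
    have hsum : (∑ k ∈ Finset.range N, w * r^(k+1)) * ((1-ε/4) * (ρ s * F s)) ≤
        ∑ k ∈ Finset.range N, ∫ u in (t (k+1))..(t k), F u := by
      rw [Finset.sum_mul]
      exact Finset.sum_le_sum hpiece
    have hls := lower_sum hr0.le h1r N
    have hfac : 0 ≤ (1-ε/4) * (ρ s * F s) :=
      mul_nonneg (by linarith) (mul_nonneg hρs hFs.le)
    have h2 : r * (1 - r^N) * ((1-ε/4) * (ρ s * F s)) ≤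
        (∑ k ∈ Finset.range N, w * r^(k+1)) * ((1-ε/4) * (ρ s * F s)) :=
      mul_le_mul_of_nonneg_right hls hfac
    have hnum : 1 - ε ≤ r * (1 - r^N) * (1-ε/4) := by
      rw [hrN]
      have hq : (0:ℝ) ≤ (1-ε/4)*(1-ε/4) := mul_self_nonneg _
      have h7 : (1-ε/4)*((1-ε/4)*(1-ε/4)) ≤ r*((1-ε/4)*(1-ε/4)) :=
        mul_le_mul_of_nonneg_right hrlow hq
      have h8 : 1 - ε ≤ (1-ε/4)*((1-ε/4)*(1-ε/4)) := cube_bound hε hε1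
      have h9 : r*((1-ε/4)*(1-ε/4)) = r*(1-ε/4)*(1-ε/4) := by ring
      linarith [h7, h8, h9]
    have hfin : (1-ε) * (ρ s * F s) ≤ r * (1-r^N) * ((1-ε/4) * (ρ s * F s)) := by
      have h9 := mul_le_mul_of_nonneg_right hnum (mul_nonneg hρs hFs.le)
      have heq : r*(1-r^N)*(1-ε/4)*(ρ s*F s) = r*(1-r^N)*((1-ε/4)*(ρ s*F s)) := by ring
      linarith [h9, heq]
    linarith [htel, htail, hsum, h2, hfin]
  filter_upwards [hρpos, hUpper, hLower, self_mem_nhdsWithin] with s h1 h2 h3 h4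
  have hFs : 0 < F s := hFpos s h4
  refine ⟨h1, ?_, ?_⟩
  · rw [le_div_iff₀ hFs]; linarith [h3]
  · rw [div_le_iff₀ hFs]; linarith [h2]

private lemma exists_lt_exp {x a : ℝ} (ha : a < Real.exp x) : ∃ y < x, a < Real.exp y := by
  rcases le_or_gt a 0 with hc | hc
  · exact ⟨x - 1, by linarith, lt_of_le_of_lt hc (exp_pos _)⟩
  · have hla : Real.log a < x := by
      have h2 := Real.log_lt_log hc ha
      rwa [Real.log_exp] at h2
    refine ⟨(Real.log a + x)/2, by linarith, ?_⟩
    calc a = Real.exp (Real.log a) := (Real.exp_log hc).symm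
      _ < Real.exp ((Real.log a + x)/2) := Real.exp_lt_exp.2 (by linarith)

private lemma exists_exp_lt {x b : ℝ} (hb : Real.exp x < b) : ∃ y > x, Real.exp y < b := by
  have h0 : 0 < b := lt_trans (exp_pos x) hb
  have hlb : x < Real.log b := by
    have h2 := Real.log_lt_log (exp_pos x) hb
    rwa [Real.log_exp] at h2
  refine ⟨(x + Real.log b)/2, by linarith, ?_⟩
  calc Real.exp ((x + Real.log b)/2) < Real.exp (Real.log b) := Real.exp_lt_exp.2 (by linarith)
    _ = b := Real.exp_log h0

/-- Uniqueness of the auxiliary function up to asymptotic equivalence at `0` :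
if `F ∈ Γ₀` with auxiliary function `ρ`, then `ρ̃ s = (∫_0^s F) / F s` satisfies
`ρ̃ s / ρ s → 1` as `s → 0⁺`, and `ρ̃` is itself an auxiliary function for `F`. -/
theorem gamma0_auxiliary_unique (F ρ : ℝ → ℝ) (h : MemGamma0 F ρ) :
    Tendsto (fun s => ((∫ t in (0 : ℝ)..s, F t) / F s) / ρ s)
      (nhdsWithin 0 (Set.Ioi 0)) (nhds 1) ∧
    ∀ x : ℝ,
      Tendsto (fun s => F (s + x * ((∫ t in (0 : ℝ)..s, F t) / F s)) / F s)
        (nhdsWithin 0 (Set.Ioi 0)) (nhds (Real.exp x)) := by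
  have h' := h
  obtain ⟨hFnn, hFneg, hm, hrc, hF0, hFpos, hρpack, hρ0, hlim⟩ := h
  constructor
  · rw [tendsto_order]
    constructor
    · intro a ha
      have hε : (0:ℝ) < min 1 ((1-a)/2) := lt_min one_pos (by linarith)
      filter_upwards [key F ρ h' hε (min_le_left _ _)] with s hs
      obtain ⟨h1, h2, h3⟩ := hs
      have h4 : 1 - min 1 ((1-a)/2) ≤ ((∫ t in (0:ℝ)..s, F t)/F s)/ρ s := by
        rw [le_div_iff₀ h1]; linarith [h2]
      have h5 : min 1 ((1-a)/2) ≤ (1-a)/2 := min_le_right _ _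
      linarith
    · intro b hb
      have hε : (0:ℝ) < min 1 ((b-1)/2) := lt_min one_pos (by linarith)
      filter_upwards [key F ρ h' hε (min_le_left _ _)] with s hs
      obtain ⟨h1, h2, h3⟩ := hs
      have h4 : ((∫ t in (0:ℝ)..s, F t)/F s)/ρ s ≤ 1 + min 1 ((b-1)/2) := by
        rw [div_le_iff₀ h1]; linarith [h3]
      have h5 : min 1 ((b-1)/2) ≤ (b-1)/2 := min_le_right _ _
      linarith
  · intro x
    have hd : (0:ℝ) < x^2+1 := by positivity
    rw [tendsto_order]
    constructor
    · intro a ha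
      obtain ⟨y, hyx, hay⟩ := exists_lt_exp ha
      set η := (x - y)/(x^2+1) with hηdef
      have hη : 0 < η := div_pos (by linarith) hd
      have hev2 := (hlim y).eventually_const_lt hay
      filter_upwards [key F ρ h' (lt_min hη one_pos) (min_le_right η 1), hev2,
        self_mem_nhdsWithin] with s hs h4 h5
      obtain ⟨h1, h2, h3⟩ := hs
      have hFs : 0 < F s := hFpos s h5
      set RT := (∫ t in (0:ℝ)..s, F t)/F s with hRT
      have hεη : min η 1 ≤ η := min_le_left _ _
      have hlo : (1-η)*ρ s ≤ RT := by
        have : (1-η)*ρ s ≤ (1-min η 1)*ρ s :=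
          mul_le_mul_of_nonneg_right (by linarith) h1.le
        linarith [h2]
      have hhi : RT ≤ (1+η)*ρ s := by
        have : (1+min η 1)*ρ s ≤ (1+η)*ρ s :=
          mul_le_mul_of_nonneg_right (by linarith) h1.le
        linarith [h3]
      have hstep : y * ρ s ≤ x * RT := by
        rcases le_or_gt 0 x with hx | hx
        · have hcoef : y ≤ x*(1-η) := by
            rw [hηdef]
            have heq : x*(1-(x-y)/(x^2+1)) = (x*(x^2+1) - x*(x-y))/(x^2+1) := by
              field_simp
            rw [heq, le_div_iff₀ hd]
            nlinarith [mul_nonneg (by linarith : (0:ℝ) ≤ x - y)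
              (by nlinarith [sq_nonneg (2*x-1)] : (0:ℝ) ≤ x^2 - x + 1)]
          calc y * ρ s ≤ (x*(1-η))*ρ s := mul_le_mul_of_nonneg_right hcoef h1.le
            _ = x*((1-η)*ρ s) := by ring
            _ ≤ x*RT := mul_le_mul_of_nonneg_left hlo hx
        · have hcoef : y ≤ x*(1+η) := by
            rw [hηdef]
            have heq : x*(1+(x-y)/(x^2+1)) = (x*(x^2+1) + x*(x-y))/(x^2+1) := by
              field_simp
            rw [heq, le_div_iff₀ hd]
            nlinarith [mul_nonneg (by linarith : (0:ℝ) ≤ x - y)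
              (by nlinarith [sq_nonneg (2*x+1)] : (0:ℝ) ≤ x^2 + x + 1)]
          calc y * ρ s ≤ (x*(1+η))*ρ s := mul_le_mul_of_nonneg_right hcoef h1.le
            _ = x*((1+η)*ρ s) := by ring
            _ ≤ x*RT := mul_le_mul_of_nonpos_left hhi hx.le
      have h6 : F (s + y * ρ s) ≤ F (s + x * RT) := hm (by linarith)
      have h7 : F (s + y * ρ s)/F s ≤ F (s + x * RT)/F s :=
        (div_le_div_iff_of_pos_right hFs).2 h6
      linarith [h4, h7]
    · intro b hb
      obtain ⟨y, hyx, hby⟩ := exists_exp_lt hb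
      set η := (y - x)/(x^2+1) with hηdef
      have hη : 0 < η := div_pos (by linarith) hd
      have hev2 := (hlim y).eventually_lt_const hby
      filter_upwards [key F ρ h' (lt_min hη one_pos) (min_le_right η 1), hev2,
        self_mem_nhdsWithin] with s hs h4 h5
      obtain ⟨h1, h2, h3⟩ := hs
      have hFs : 0 < F s := hFpos s h5
      set RT := (∫ t in (0:ℝ)..s, F t)/F s with hRT
      have hεη : min η 1 ≤ η := min_le_left _ _
      have hlo : (1-η)*ρ s ≤ RT := by
        have : (1-η)*ρ s ≤ (1-min η 1)*ρ s :=
          mul_le_mul_of_nonneg_right (by linarith) h1.le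
        linarith [h2]
      have hhi : RT ≤ (1+η)*ρ s := by
        have : (1+min η 1)*ρ s ≤ (1+η)*ρ s :=
          mul_le_mul_of_nonneg_right (by linarith) h1.le
        linarith [h3]
      have hstep : x * RT ≤ y * ρ s := by
        rcases le_or_gt 0 x with hx | hx
        · have hcoef : x*(1+η) ≤ y := by
            rw [hηdef]
            have heq : x*(1+(y-x)/(x^2+1)) = (x*(x^2+1) + x*(y-x))/(x^2+1) := by
              field_simp
            rw [heq, div_le_iff₀ hd]
            nlinarith [mul_nonneg (by linarith : (0:ℝ) ≤ y - x)
              (by nlinarith [sq_nonneg (2*x-1)] : (0:ℝ) ≤ x^2 - x + 1)]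
          calc x*RT ≤ x*((1+η)*ρ s) := mul_le_mul_of_nonneg_left hhi hx
            _ = (x*(1+η))*ρ s := by ring
            _ ≤ y * ρ s := mul_le_mul_of_nonneg_right hcoef h1.le
        · have hcoef : x*(1-η) ≤ y := by
            rw [hηdef]
            have heq : x*(1-(y-x)/(x^2+1)) = (x*(x^2+1) - x*(y-x))/(x^2+1) := by
              field_simp
            rw [heq, div_le_iff₀ hd]
            nlinarith [mul_nonneg (by linarith : (0:ℝ) ≤ y - x)
              (by nlinarith [sq_nonneg (2*x+1)] : (0:ℝ) ≤ x^2 + x + 1)]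
          calc x*RT ≤ x*((1-η)*ρ s) := mul_le_mul_of_nonpos_left hlo hx.le
            _ = (x*(1-η))*ρ s := by ring
            _ ≤ y * ρ s := mul_le_mul_of_nonneg_right hcoef h1.le
      have h6 : F (s + x * RT) ≤ F (s + y * ρ s) := hm (by linarith)
      have h7 : F (s + x * RT)/F s ≤ F (s + y * ρ s)/F s :=
        (div_le_div_iff_of_pos_right hFs).2 h6
      linarith [h4, h7]
end

section
/- Let F belong to the class Γ₀ with auxiliary function ρ. Then for every λ > 0, as s → 0⁺ the ratio F(λs)/F(s) tends to +∞ if λ > 1, to 1 if λ = 1, and to 0 if λ < 1. In particular F is rapidly varying and not regularly varying at 0. -/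
open Filter Set Real

/-- Rapid variation of functions of class `Γ₀` : if `F ∈ Γ₀` with auxiliary function `ρ`
then, as `s → 0⁺`, `F (λ s) / F s` tends to `+∞` if `λ > 1`, to `1` if `λ = 1`, and to
`0` if `λ < 1` (`λ > 0`). In particular `F` is rapidly varying (not regularly varying)
at `0`. -/
theorem gamma0_rapidly_varying (F ρ : ℝ → ℝ) (h : MemGamma0 F ρ) (l : ℝ) (hl : 0 < l) :
    (1 < l → Tendsto (fun s => F (l * s) / F s) (nhdsWithin 0 (Set.Ioi 0)) atTop) ∧
    (l = 1 → Tendsto (fun s => F (l * s) / F s) (nhdsWithin 0 (Set.Ioi 0)) (nhds 1)) ∧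
    (l < 1 → Tendsto (fun s => F (l * s) / F s) (nhdsWithin 0 (Set.Ioi 0)) (nhds 0)) := by
  obtain ⟨hF0, hFneg, hmono, -, hF00, hFpos, -, hρ0, hlim⟩ := h
  -- Key: the auxiliary function is `o(s)` as `s → 0⁺`.
  have key : ∀ c : ℝ, 0 < c → ∀ᶠ s in nhdsWithin (0:ℝ) (Set.Ioi 0), ρ s ≤ c * s := by
    intro c hc
    have h1 := hlim (-(1/c))
    have h2 : ∀ᶠ s in nhdsWithin (0:ℝ) (Set.Ioi 0),
        0 < F (s + -(1/c) * ρ s) / F s :=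
      h1.eventually (eventually_gt_nhds (Real.exp_pos _))
    filter_upwards [h2, self_mem_nhdsWithin] with s hr hs
    by_contra hcon
    push_neg at hcon
    have hle : s + -(1/c) * ρ s ≤ 0 := by
      have h4 : (1/c) * (c*s) < (1/c) * ρ s :=
        mul_lt_mul_of_pos_left hcon (one_div_pos.mpr hc)
      have h5 : (1/c) * (c*s) = s := by field_simp
      rw [neg_mul]
      linarith
    rw [hFneg _ hle, zero_div] at hr
    exact lt_irrefl _ hr
  refine ⟨?_, ?_, ?_⟩
  · -- l > 1
    intro hl1
    rw [tendsto_atTop]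
    intro M
    set x : ℝ := |M| + 1 with hx
    have hxpos : 0 < x := by rw [hx]; positivity
    have hMx : M < Real.exp x := by
      have h1 : x + 1 ≤ Real.exp x := Real.add_one_le_exp x
      have : M ≤ |M| := le_abs_self M
      linarith
    have hc : (0:ℝ) < (l - 1) / x := div_pos (by linarith) hxpos
    have h2 : ∀ᶠ s in nhdsWithin (0:ℝ) (Set.Ioi 0),
        M < F (s + x * ρ s) / F s := (hlim x).eventually (eventually_gt_nhds hMx)
    filter_upwards [h2, key _ hc, self_mem_nhdsWithin] with s hr hρs hs
    have hFs : 0 < F s := hFpos s hs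
    have harg : s + x * ρ s ≤ l * s := by
      have : x * ρ s ≤ x * ((l - 1) / x * s) := by
        apply mul_le_mul_of_nonneg_left _ hxpos.le
        exact hρs
      have hxc : x * ((l - 1) / x * s) = (l - 1) * s := by
        field_simp
      have h4 : x * ρ s ≤ (l - 1) * s := hxc ▸ this
      nlinarith
    exact (hr.trans_le ((div_le_div_iff_of_pos_right hFs).mpr (hmono harg))).le
  · -- l = 1
    intro hl1
    subst hl1
    have : (fun s => F (1 * s) / F s) =ᶠ[nhdsWithin (0:ℝ) (Set.Ioi 0)]
        (fun _ => (1 : ℝ)) := by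
      filter_upwards [self_mem_nhdsWithin] with s hs
      rw [one_mul, div_self (hFpos s hs).ne']
    exact Tendsto.congr' this.symm tendsto_const_nhds
  · -- l < 1
    intro hl1
    rw [NormedAddCommGroup.tendsto_nhds_zero]
    intro ε hε
    set x : ℝ := min (Real.log ε - 1) (-1) with hx
    have hxneg : x < 0 := lt_of_le_of_lt (min_le_right _ _) (by norm_num)
    have hexp : Real.exp x < ε := by
      have h1 : x ≤ Real.log ε - 1 := min_le_left _ _
      calc Real.exp x ≤ Real.exp (Real.log ε - 1) := Real.exp_le_exp.mpr h1
        _ < Real.exp (Real.log ε) := Real.exp_lt_exp.mpr (by linarith)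
        _ = ε := Real.exp_log hε
    have hc : (0:ℝ) < (1 - l) / (-x) := by
      apply div_pos (by linarith) (by linarith)
    have h2 : ∀ᶠ s in nhdsWithin (0:ℝ) (Set.Ioi 0),
        F (s + x * ρ s) / F s < ε := (hlim x).eventually (eventually_lt_nhds hexp)
    filter_upwards [h2, key _ hc, self_mem_nhdsWithin] with s hr hρs hs
    have hFs : 0 < F s := hFpos s hs
    have harg : l * s ≤ s + x * ρ s := by
      have h3 : x * ((1 - l) / (-x) * s) ≤ x * ρ s :=
        mul_le_mul_of_nonpos_left hρs hxneg.le
      have hxc : x * ((1 - l) / (-x) * s) = (l - 1) * s := by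
        have hx0 : x ≠ 0 := hxneg.ne
        rw [div_neg, neg_mul, mul_neg, neg_eq_iff_eq_neg, div_mul_eq_mul_div,
          mul_div_assoc', mul_div_cancel_left₀ _ hx0]
        ring
      have h4 : (l - 1) * s ≤ x * ρ s := hxc ▸ h3
      nlinarith
    have hle : F (l * s) / F s ≤ F (s + x * ρ s) / F s :=
      (div_le_div_iff_of_pos_right hFs).mpr (hmono harg)
    rw [Real.norm_eq_abs, abs_of_nonneg (div_nonneg (hF0 _) hFs.le)]
    exact lt_of_le_of_lt hle hr
end

section
/- Let β > 1 and C₁, C₂ > 0, and define F(s) = C₁ · s^{−1/(2β−2)} · exp(−C₂ · s^{−1/(β−1)}) for s > 0 and F(s) = 0 for s ≤ 0. Then F belongs to the class Γ₀ with auxiliary function ρ₁(s) = M₁ · s^{1+1/(β−1)} for a suitable positive constant M₁ (namely M₁ = (β−1)/C₂): for every x ∈ ℝ, F(s + x·ρ₁(s))/F(s) → exp(x) as s → 0⁺. -/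
open Filter Set Real Topology

/-! Put `γ = 1/(β-1)` and `t = s^γ`. Then `s + x ρ₁(s) = s (1 + a t)` with `a = x (β-1)/C₂`, and
`F(s (1 + a t)) / F(s) = (1 + a t)^(-γ/2) · exp (-C₂ ((1 + a t)^(-γ) - 1) / t)`.
As `t → 0⁺` the difference quotient tends to the derivative `-γ a` of `t ↦ (1 + a t)^(-γ)` at `0`,
so the ratio tends to `exp (C₂ γ a) = exp x`. -/

lemma tendsto_one_add_mul_nhds_zero (a : ℝ) :
    Tendsto (fun t : ℝ => 1 + a * t) (𝓝 0) (𝓝 1) :=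
  (by fun_prop : Continuous fun t : ℝ => 1 + a * t).tendsto' 0 1 (by simp)

lemma tendsto_one_add_mul_rpow_sub_one_div (a p : ℝ) :
    Tendsto (fun t : ℝ => ((1 + a * t) ^ p - 1) / t) (𝓝[≠] 0) (𝓝 (p * a)) := by
  have hderiv : HasDerivAt (fun t : ℝ => (1 + a * t) ^ p) (p * a) 0 := by
    simpa [mul_comm] using
      (((hasDerivAt_id (0 : ℝ)).const_mul a).const_add 1).rpow_const (p := p) (by simp)
  exact (hasDerivAt_iff_tendsto_slope.mp hderiv).congr fun t => by simp [slope_def_field]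

lemma tendsto_one_add_mul_rpow_mul_exp (C q γ a : ℝ) :
    Tendsto (fun t : ℝ => (1 + a * t) ^ (-q) * exp (-C * (((1 + a * t) ^ (-γ) - 1) / t)))
      (𝓝[≠] 0) (𝓝 (exp (C * γ * a))) := by
  have hfactor : Tendsto (fun t : ℝ => (1 + a * t) ^ (-q)) (𝓝[≠] 0) (𝓝 1) := by
    simpa using ((tendsto_one_add_mul_nhds_zero a).mono_left nhdsWithin_le_nhds).rpow_const
      (p := -q) (Or.inl one_ne_zero)
  have hexp := ((tendsto_one_add_mul_rpow_sub_one_div a (-γ)).const_mul (-C)).rexp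
  rw [show exp (C * γ * a) = 1 * exp (-C * (-γ * a)) by ring_nf]
  exact hfactor.mul hexp

lemma tendsto_rpow_nhdsGT_zero {γ : ℝ} (hγ : 0 < γ) :
    Tendsto (fun s : ℝ => s ^ γ) (𝓝[>] 0) (𝓝[>] 0) := by
  refine tendsto_nhdsWithin_of_tendsto_nhds_of_eventually_within _ ?_ ?_
  · simpa [zero_rpow hγ.ne'] using
      (continuousAt_rpow_const 0 γ (Or.inr hγ.le)).tendsto.mono_left nhdsWithin_le_nhds
  · filter_upwards [self_mem_nhdsWithin] with s hs using rpow_pos_of_pos hs γ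

section RpowMulExp

variable {F : ℝ → ℝ} {C₁ C₂ q γ : ℝ}

lemma div_eq_rpow_mul_exp_of_mul (hC₁ : C₁ ≠ 0)
    (hF : ∀ s, 0 < s → F s = C₁ * s ^ (-q) * exp (-C₂ * s ^ (-γ)))
    {s u : ℝ} (hs : 0 < s) (hu : 0 < u) :
    F (s * u) / F s = u ^ (-q) * exp (-C₂ * ((u ^ (-γ) - 1) / s ^ γ)) := by
  have hsγ : s ^ γ ≠ 0 := (rpow_pos_of_pos hs γ).ne'
  have hexp : exp (-C₂ * ((s ^ γ)⁻¹ * u ^ (-γ)))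
      = exp (-C₂ * ((u ^ (-γ) - 1) / s ^ γ)) * exp (-C₂ * (s ^ γ)⁻¹) := by
    rw [← exp_add]
    congr 1
    field_simp
    ring
  rw [hF _ (mul_pos hs hu), hF s hs, mul_rpow hs.le hu.le, mul_rpow hs.le hu.le,
    rpow_neg hs.le γ, div_eq_iff (by positivity), hexp]
  ring

theorem tendsto_div_mul_one_add_mul_rpow (hγ : 0 < γ) (hC₁ : C₁ ≠ 0)
    (hF : ∀ s, 0 < s → F s = C₁ * s ^ (-q) * exp (-C₂ * s ^ (-γ))) (a : ℝ) :
    Tendsto (fun s => F (s * (1 + a * s ^ γ)) / F s) (𝓝[>] 0) (𝓝 (exp (C₂ * γ * a))) := by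
  have hpow := tendsto_rpow_nhdsGT_zero hγ
  have hlim := (tendsto_one_add_mul_rpow_mul_exp C₂ q γ a).comp
    (hpow.mono_right (nhdsGT_le_nhdsNE 0))
  have hpos : ∀ᶠ s in 𝓝[>] (0 : ℝ), 0 < 1 + a * s ^ γ :=
    hpow.eventually (((tendsto_one_add_mul_nhds_zero a).eventually
      (lt_mem_nhds one_pos)).filter_mono nhdsWithin_le_nhds)
  refine hlim.congr' ?_
  filter_upwards [hpos, self_mem_nhdsWithin] with s hu hs
  exact (div_eq_rpow_mul_exp_of_mul hC₁ hF hs hu).symm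

end RpowMulExp

theorem polynomial_smallBall_memGamma0_general (β C₁ C₂ : ℝ) (hβ : 1 < β) (hC₁ : 0 < C₁)
    (hC₂ : 0 < C₂) (F : ℝ → ℝ)
    (hFpos : ∀ s : ℝ, 0 < s →
      F s = C₁ * s ^ (-(1 / (2 * β - 2))) * Real.exp (-C₂ * s ^ (-(1 / (β - 1))))) :
    ∀ x : ℝ,
      Tendsto (fun s => F (s + x * (((β - 1) / C₂) * s ^ (1 + 1 / (β - 1)))) / F s)
        (nhdsWithin 0 (Set.Ioi 0)) (nhds (Real.exp x)) := by
  intro x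
  have hβ₁ : 0 < β - 1 := sub_pos.mpr hβ
  have hF : ∀ s, 0 < s →
      F s = C₁ * s ^ (-(1 / (β - 1) / 2)) * exp (-C₂ * s ^ (-(1 / (β - 1)))) := by
    intro s hs
    rw [hFpos s hs, div_div, mul_comm (β - 1), mul_sub_one]
  have hlim := tendsto_div_mul_one_add_mul_rpow (one_div_pos.mpr hβ₁) hC₁.ne' hF
    (x * ((β - 1) / C₂))
  have hexponent : C₂ * (1 / (β - 1)) * (x * ((β - 1) / C₂)) = x := by
    field_simp
  rw [hexponent] at hlim
  refine hlim.congr' ?_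
  filter_upwards [self_mem_nhdsWithin] with s hs
  rw [rpow_add hs, rpow_one]
  congr 2
  ring

/-- The small ball probability for polynomial eigenvalues belongs to the class `Γ₀` :
for `β > 1`, `C₁, C₂ > 0`, `F s = C₁ * s ^ (-1/(2β-2)) * exp (-C₂ * s ^ (-1/(β-1)))`
for `s > 0` (and `F s = 0` for `s ≤ 0`) satisfies, with auxiliary function
`ρ₁ s = M₁ * s ^ (1 + 1/(β-1))` where `M₁ = (β-1)/C₂`,
`F (s + x * ρ₁ s) / F s → exp x` as `s → 0⁺` for every `x ∈ ℝ`. -/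
theorem polynomial_smallBall_memGamma0 (β C₁ C₂ : ℝ) (hβ : 1 < β) (hC₁ : 0 < C₁)
    (hC₂ : 0 < C₂) (F : ℝ → ℝ)
    (hFpos : ∀ s : ℝ, 0 < s →
      F s = C₁ * s ^ (-(1 / (2 * β - 2))) * Real.exp (-C₂ * s ^ (-(1 / (β - 1)))))
    (hFzero : ∀ s : ℝ, s ≤ 0 → F s = 0) :
    ∀ x : ℝ,
      Tendsto (fun s => F (s + x * (((β - 1) / C₂) * s ^ (1 + 1 / (β - 1)))) / F s)
        (nhdsWithin 0 (Set.Ioi 0)) (nhds (Real.exp x)) :=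
  polynomial_smallBall_memGamma0_general β C₁ C₂ hβ hC₁ hC₂ F hFpos
end

section
/- Let F belong to the class Γ₀ with auxiliary function ρ_F, and define G(s) = F(s²). Then G belongs to Γ₀ with auxiliary function ρ_G(s) = ρ_F(s²)/(2s); that is, for every x ∈ ℝ, G(s + x·ρ_G(s))/G(s) → exp(x) as s → 0⁺, ρ_G(s)/s → 0, and ρ_G is self-neglecting at 0. -/
/-!
Put `t = s ^ 2`. Then `(s + x ρF t / (2 s)) ^ 2 = t + (x + x ^ 2 (ρF t / t) / 4) ρF t`, and
`ρF t / t → 0`, since otherwise `F (t - ρF t / ε)` would vanish for small `t`. As `F` and `ρF` are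
monotone, the limits `F (t + y ρF t) / F t → exp x` and `ρF (t + y ρF t) / ρF t → 1` hold not
only for `y = x` but for any `y → x`; this gives all three claims.
-/

open Filter Set Real

open Topology

section Comparison

variable {α β : Type*} {F : ℝ → ℝ}

lemma eventually_lt_of_tendsto_div {l : Filter α} (hFmono : Monotone F) (hFnn : ∀ s, 0 ≤ F s)
    {f g τ : α → ℝ} {a b : ℝ} (hf : Tendsto (fun i => F (f i) / F (τ i)) l (𝓝 a))
    (hg : Tendsto (fun i => F (g i) / F (τ i)) l (𝓝 b)) (hab : a < b) :
    ∀ᶠ i in l, f i < g i := by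
  filter_upwards [hf.eventually_lt hg hab] with i hi
  by_contra! hgf
  exact (div_le_div_of_nonneg_right (hFmono hgf) (hFnn _)).not_gt hi

lemma tendsto_comp_of_monotoneOn {l : Filter α} {l' : Filter β} {G : ℝ → β → ℝ} {L : ℝ → ℝ}
    {x : ℝ} (hL : ContinuousAt L x) (hG : ∀ y, Tendsto (G y) l' (𝓝 (L y)))
    (hmono : ∀ a b, ∀ᶠ t in l', MonotoneOn (G · t) (Icc a b))
    {τ : α → β} {z : α → ℝ} (hτ : Tendsto τ l l') (hz : Tendsto z l (𝓝 x)) :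
    Tendsto (fun i => G (z i) (τ i)) l (𝓝 (L x)) := by
  refine tendsto_order.2 ⟨fun c hc => ?_, fun c hc => ?_⟩
  · obtain ⟨y, hyx, hcy⟩ := (hL.eventually (lt_mem_nhds hc)).exists_lt
    have hzy : ∀ᶠ i in l, z i ∈ Icc y (x + 1) :=
      hz.eventually (Icc_mem_nhds hyx (lt_add_one x))
    filter_upwards [hzy, hτ.eventually ((hG y).eventually (lt_mem_nhds hcy)),
      hτ.eventually (hmono y (x + 1))] with i hzi hci hmi
    exact hci.trans_le (hmi (left_mem_Icc.2 (hzi.1.trans hzi.2)) hzi hzi.1)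
  · obtain ⟨y, hxy, hcy⟩ := (hL.eventually (gt_mem_nhds hc)).exists_gt
    have hzy : ∀ᶠ i in l, z i ∈ Icc (x - 1) y :=
      hz.eventually (Icc_mem_nhds (sub_one_lt x) hxy)
    filter_upwards [hzy, hτ.eventually ((hG y).eventually (gt_mem_nhds hcy)),
      hτ.eventually (hmono (x - 1) y)] with i hzi hci hmi
    exact (hmi hzi (right_mem_Icc.2 (hzi.1.trans hzi.2)) hzi.2).trans_lt hci

end Comparison

lemma tendsto_sq_nhdsGT_zero : Tendsto (fun s : ℝ => s ^ 2) (𝓝[>] 0) (𝓝[>] 0) := by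
  refine tendsto_nhdsWithin_iff.2 ⟨?_, ?_⟩
  · simpa using ((continuous_pow 2).tendsto (0 : ℝ)).mono_left nhdsWithin_le_nhds
  · filter_upwards [self_mem_nhdsWithin] with s (hs : 0 < s)
    exact pow_pos hs 2

lemma sq_add_mul_div_two_mul {s : ℝ} (hs : s ≠ 0) (y r : ℝ) :
    (s + y * (r / (2 * s))) ^ 2 = s ^ 2 + (y + y ^ 2 * (r / s ^ 2) / 4) * r := by
  field_simp
  ring

def GammaVarying (F ρ : ℝ → ℝ) : Prop :=
  ∀ x : ℝ, Tendsto (fun s => F (s + x * ρ s) / F s) (𝓝[>] 0) (𝓝 (exp x))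

namespace GammaVarying

variable {F ρ : ℝ → ℝ}

lemma eventually_add_mul_pos (h : GammaVarying F ρ) (hF0 : ∀ s ≤ 0, F s = 0) (x : ℝ) :
    ∀ᶠ t in 𝓝[>] 0, 0 < t + x * ρ t := by
  filter_upwards [(h x).eventually_ne (exp_pos x).ne'] with t ht
  by_contra! hle
  simp [hF0 _ hle] at ht

lemma eventually_pos (h : GammaVarying F ρ) (hFmono : Monotone F) (hFnn : ∀ s, 0 ≤ F s) :
    ∀ᶠ t in 𝓝[>] 0, 0 < ρ t := by
  filter_upwards [eventually_lt_of_tendsto_div hFmono hFnn (h 0) (h 1) (exp_lt_exp.2 one_pos)]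
    with t ht
  linarith

lemma tendsto_div_self (h : GammaVarying F ρ) (hF0 : ∀ s ≤ 0, F s = 0) (hFmono : Monotone F)
    (hFnn : ∀ s, 0 ≤ F s) : Tendsto (fun t => ρ t / t) (𝓝[>] 0) (𝓝 0) := by
  refine tendsto_order.2 ⟨fun a ha => ?_, fun b hb => ?_⟩
  · filter_upwards [h.eventually_pos hFmono hFnn, self_mem_nhdsWithin] with t hρ (ht : 0 < t)
    exact ha.trans (div_pos hρ ht)
  · filter_upwards [h.eventually_add_mul_pos hF0 (-b⁻¹), self_mem_nhdsWithin]
      with t hpos (ht : 0 < t)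
    rw [div_lt_iff₀ ht]
    have := mul_lt_mul_of_pos_left (by linarith : b⁻¹ * ρ t < t) hb
    rwa [← mul_assoc, mul_inv_cancel₀ hb.ne', one_mul] at this

lemma tendsto_add_mul (h : GammaVarying F ρ) (hF0 : ∀ s ≤ 0, F s = 0) (hFmono : Monotone F)
    (hFnn : ∀ s, 0 ≤ F s) (x : ℝ) :
    Tendsto (fun t => t + x * ρ t) (𝓝[>] 0) (𝓝[>] 0) := by
  have hid : Tendsto (fun t : ℝ => t) (𝓝[>] 0) (𝓝 0) :=
    tendsto_nhdsWithin_of_tendsto_nhds tendsto_id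
  have hρ : Tendsto ρ (𝓝[>] 0) (𝓝 0) := by
    have := (h.tendsto_div_self hF0 hFmono hFnn).mul hid
    rw [zero_mul] at this
    refine this.congr' ?_
    filter_upwards [self_mem_nhdsWithin] with t (ht : 0 < t)
    exact div_mul_cancel₀ _ ht.ne'
  refine tendsto_nhdsWithin_iff.2 ⟨?_, h.eventually_add_mul_pos hF0 x⟩
  simpa using hid.add (hρ.const_mul x)

lemma tendsto_comp_add_mul (h : GammaVarying F ρ) (hF0 : ∀ s ≤ 0, F s = 0) (hFmono : Monotone F)
    (hFpos : ∀ s > 0, 0 < F s) (hFnn : ∀ s, 0 ≤ F s) (x y : ℝ) :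
    Tendsto (fun t => F (t + x * ρ t + y * ρ (t + x * ρ t)) / F t) (𝓝[>] 0)
      (𝓝 (exp (x + y))) := by
  rw [add_comm x, exp_add]
  refine (((h y).comp (h.tendsto_add_mul hF0 hFmono hFnn x)).mul (h x)).congr' ?_
  filter_upwards [h.eventually_add_mul_pos hF0 x] with t ht
  exact div_mul_div_cancel₀ (hFpos _ ht).ne'

/-- Compare `F (t + (x + c) ρ t)` with `F (u + ρ u)`, `u = t + x ρ t`, whose ratios to `F t`
tend to `exp (x + c)` and `exp (x + 1)`. -/
lemma tendsto_selfNeglecting (h : GammaVarying F ρ) (hF0 : ∀ s ≤ 0, F s = 0)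
    (hFmono : Monotone F) (hFpos : ∀ s > 0, 0 < F s) (hFnn : ∀ s, 0 ≤ F s) (x : ℝ) :
    Tendsto (fun t => ρ (t + x * ρ t) / ρ t) (𝓝[>] 0) (𝓝 1) := by
  have hcomp := h.tendsto_comp_add_mul hF0 hFmono hFpos hFnn x 1
  refine tendsto_order.2 ⟨fun c hc => ?_, fun c hc => ?_⟩
  · filter_upwards [h.eventually_pos hFmono hFnn,
      eventually_lt_of_tendsto_div hFmono hFnn (h (x + c)) hcomp (by gcongr)] with t hρ ht
    rw [lt_div_iff₀ hρ]
    linarith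
  · filter_upwards [h.eventually_pos hFmono hFnn,
      eventually_lt_of_tendsto_div hFmono hFnn hcomp (h (x + c)) (by gcongr)] with t hρ ht
    rw [div_lt_iff₀ hρ]
    linarith

lemma tendsto_div_of_tendsto {α : Type*} {l : Filter α} (h : GammaVarying F ρ)
    (hFmono : Monotone F) (hFnn : ∀ s, 0 ≤ F s) {τ z : α → ℝ} {x : ℝ}
    (hτ : Tendsto τ l (𝓝[>] 0)) (hz : Tendsto z l (𝓝 x)) :
    Tendsto (fun i => F (τ i + z i * ρ (τ i)) / F (τ i)) l (𝓝 (exp x)) := by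
  refine tendsto_comp_of_monotoneOn (G := fun y t => F (t + y * ρ t) / F t)
    continuous_exp.continuousAt h (fun _ _ => ?_) hτ hz
  filter_upwards [h.eventually_pos hFmono hFnn] with t hρ y₁ _ y₂ _ hy
  exact div_le_div_of_nonneg_right (hFmono (by gcongr)) (hFnn t)

lemma tendsto_selfNeglecting_of_tendsto {α : Type*} {l : Filter α} (h : GammaVarying F ρ)
    (hF0 : ∀ s ≤ 0, F s = 0) (hFmono : Monotone F) (hFpos : ∀ s > 0, 0 < F s)
    (hFnn : ∀ s, 0 ≤ F s) {δ : ℝ} (hδ : 0 < δ) (hρmono : MonotoneOn ρ (Ico 0 δ))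
    {τ z : α → ℝ} {x : ℝ} (hτ : Tendsto τ l (𝓝[>] 0)) (hz : Tendsto z l (𝓝 x)) :
    Tendsto (fun i => ρ (τ i + z i * ρ (τ i)) / ρ (τ i)) l (𝓝 1) := by
  refine tendsto_comp_of_monotoneOn (G := fun y t => ρ (t + y * ρ t) / ρ t) (L := fun _ => 1)
    continuousAt_const (h.tendsto_selfNeglecting hF0 hFmono hFpos hFnn) (fun a b => ?_) hτ hz
  have hbδ : ∀ᶠ t in 𝓝[>] 0, t + b * ρ t < δ :=
    (h.tendsto_add_mul hF0 hFmono hFnn b).mono_right nhdsWithin_le_nhds |>.eventually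
      (gt_mem_nhds hδ)
  filter_upwards [h.eventually_pos hFmono hFnn, h.eventually_add_mul_pos hF0 a, hbδ]
    with t hρ ha hb y₁ hy₁ y₂ hy₂ hy
  have hmem : ∀ y ∈ Icc a b, t + y * ρ t ∈ Ico 0 δ := fun y hy =>
    ⟨ha.le.trans (by gcongr; exact hy.1), lt_of_le_of_lt (by gcongr; exact hy.2) hb⟩
  exact div_le_div_of_nonneg_right (hρmono (hmem y₁ hy₁) (hmem y₂ hy₂) (by gcongr)) hρ.le

lemma tendsto_sq_div_sq (h : GammaVarying F ρ) (hF0 : ∀ s ≤ 0, F s = 0) (hFmono : Monotone F)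
    (hFnn : ∀ s, 0 ≤ F s) : Tendsto (fun s => ρ (s ^ 2) / s ^ 2) (𝓝[>] 0) (𝓝 0) :=
  (h.tendsto_div_self hF0 hFmono hFnn).comp tendsto_sq_nhdsGT_zero

lemma tendstoLocallyUniformly_selfNeglecting_sq (h : GammaVarying F ρ)
    (hF0 : ∀ s ≤ 0, F s = 0) (hFmono : Monotone F) (hFpos : ∀ s > 0, 0 < F s)
    (hFnn : ∀ s, 0 ≤ F s) {δ : ℝ} (hδ : 0 < δ) (hρmono : MonotoneOn ρ (Ico 0 δ)) :
    TendstoLocallyUniformly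
      (fun s x => (ρ ((s + x * (ρ (s ^ 2) / (2 * s))) ^ 2) /
        (2 * (s + x * (ρ (s ^ 2) / (2 * s))))) / (ρ (s ^ 2) / (2 * s)))
      (fun _ => (1 : ℝ)) (𝓝[>] 0) := by
  rw [tendstoLocallyUniformly_iff_forall_tendsto]
  intro x₀
  rw [← Uniform.tendsto_nhds_right]
  have hA := (h.tendsto_sq_div_sq hF0 hFmono hFnn).comp (tendsto_fst (g := 𝓝 x₀))
  have hz : Tendsto (fun p : ℝ × ℝ => p.2 + p.2 ^ 2 * (ρ (p.1 ^ 2) / p.1 ^ 2) / 4)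
      (𝓝[>] 0 ×ˢ 𝓝 x₀) (𝓝 x₀) := by
    simpa using tendsto_snd.add (((tendsto_snd.pow 2).mul hA).div_const 4)
  have hρ := h.tendsto_selfNeglecting_of_tendsto hF0 hFmono hFpos hFnn hδ hρmono
    (tendsto_sq_nhdsGT_zero.comp tendsto_fst) hz
  have hsu : Tendsto (fun p : ℝ × ℝ => (1 + p.2 * (ρ (p.1 ^ 2) / p.1 ^ 2 / 2))⁻¹)
      (𝓝[>] 0 ×ˢ 𝓝 x₀) (𝓝 1) := by
    simpa using ((tendsto_const_nhds (x := (1 : ℝ))).add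
      (tendsto_snd.mul (hA.div_const 2))).inv₀ (by simp)
  simpa using (hρ.mul hsu).congr' <| by
    filter_upwards [tendsto_fst.eventually self_mem_nhdsWithin] with ⟨s, y⟩ (hs : 0 < s)
    have hu : 2 * (s + y * (ρ (s ^ 2) / (2 * s))) =
        2 * s * (1 + y * (ρ (s ^ 2) / s ^ 2 / 2)) := by
      field_simp
    simp only [Function.comp, sq_add_mul_div_two_mul hs.ne', hu]
    rw [mul_comm (2 * s), ← div_div, div_div_div_cancel_right₀ (by positivity)]
    ring

end GammaVarying

/-- If `F ∈ Γ₀` with auxiliary function `ρF`, then `G s = F (s²)` belongs to `Γ₀` with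
auxiliary function `ρG s = ρF (s²) / (2 s)` : `G (s + x * ρG s) / G s → exp x` as
`s → 0⁺` for every `x`, `ρG s / s → 0`, and `ρG` is self-neglecting at `0`. -/
theorem gamma0_of_square (F ρF : ℝ → ℝ) (h : MemGamma0 F ρF) :
    (∀ x : ℝ,
      Tendsto (fun s => F ((s + x * (ρF (s ^ 2) / (2 * s))) ^ 2) / F (s ^ 2))
        (nhdsWithin 0 (Set.Ioi 0)) (nhds (Real.exp x))) ∧
    Tendsto (fun s => (ρF (s ^ 2) / (2 * s)) / s) (nhdsWithin 0 (Set.Ioi 0)) (nhds 0) ∧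
    TendstoLocallyUniformly
      (fun s x =>
        (ρF ((s + x * (ρF (s ^ 2) / (2 * s))) ^ 2) /
            (2 * (s + x * (ρF (s ^ 2) / (2 * s))))) /
          (ρF (s ^ 2) / (2 * s)))
      (fun _ => (1 : ℝ)) (nhdsWithin 0 (Set.Ioi 0)) := by
  obtain ⟨hFnn, hF0, hFmono, -, -, hFpos, ⟨δ, hδ, -, hρmono, -⟩, -, h : GammaVarying F ρF⟩ := h
  have hA := h.tendsto_sq_div_sq hF0 hFmono hFnn
  refine ⟨fun x => ?_, ?_,
    h.tendstoLocallyUniformly_selfNeglecting_sq hF0 hFmono hFpos hFnn hδ hρmono⟩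
  · have hz : Tendsto (fun s => x + x ^ 2 * (ρF (s ^ 2) / s ^ 2) / 4) (𝓝[>] 0) (𝓝 x) := by
      simpa using tendsto_const_nhds.add ((hA.const_mul (x ^ 2)).div_const 4)
    refine (h.tendsto_div_of_tendsto hFmono hFnn tendsto_sq_nhdsGT_zero hz).congr' ?_
    filter_upwards [self_mem_nhdsWithin] with s (hs : 0 < s)
    rw [sq_add_mul_div_two_mul hs.ne']
  · simpa using (hA.div_const 2).congr fun s => by ring
end

section
/- Let (aᵢ)_{i≥1} be a nondecreasing sequence of positive reals with Σᵢ 1/aᵢ² < ∞, and define ψ(u) = √(Σᵢ 2u²/(aᵢ²+2u)²) and μ(θ) = Σᵢ 1/(aᵢ²+2θ) for u, θ > 0. Then for every u > 0, ψ'(u)/ψ(u) = (1/u) · (Σᵢ aᵢ²/(aᵢ²+2u)³)/(Σᵢ 1/(aᵢ²+2u)²); consequently ψ is increasing on (0,∞) and ψ∘μ⁻¹ is decreasing. -/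
open Set Real

/-! With `b = a²`, write `T u = Σ 1/(b + 2u)²` and `A u = Σ b/(b + 2u)³`; both converge because
`(b + 2u)² ≥ 8bu`. Then `ψ² = 2u² T`, and differentiating termwise (the derivatives are dominated
by `2/b` uniformly in `u > 0`) gives `(ψ²)' = 4u A`, so `ψ'/ψ = (ψ²)'/(2ψ²) = A/(uT) > 0`.
Every term of `μ` is strictly decreasing, so `μ` is, and `ψ ∘ μ⁻¹` is strictly decreasing on its
range. -/

lemma StrictMonoOn.comp_leftInvOn_strictAntiOn {α β γ : Type*} [LinearOrder α]
    [LinearOrder β] [Preorder γ] {f : α → γ} {g : α → β} {h : β → α} {s : Set α}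
    (hf : StrictMonoOn f s) (hg : StrictAntiOn g s) (hh : ∀ x ∈ s, h (g x) = x) :
    StrictAntiOn (fun y => f (h y)) (g '' s) := by
  rintro _ ⟨x, hx, rfl⟩ _ ⟨y, hy, rfl⟩ hlt
  simp only [hh x hx, hh y hy]
  exact hf hy hx ((hg.lt_iff_gt hx hy).mp hlt)

lemma hasDerivAt_two_mul_sq_div_add_two_mul_sq {b x : ℝ} (hx : b + 2 * x ≠ 0) :
    HasDerivAt (fun y => 2 * y ^ 2 / (b + 2 * y) ^ 2) (4 * x * b / (b + 2 * x) ^ 3) x := by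
  have hnum : HasDerivAt (fun y : ℝ => 2 * y ^ 2) (2 * (2 * x)) x := by
    simpa using (hasDerivAt_pow 2 x).const_mul 2
  have hden : HasDerivAt (fun y : ℝ => (b + 2 * y) ^ 2) (2 * (b + 2 * x) * 2) x := by
    simpa using (((hasDerivAt_id x).const_mul 2).const_add b).fun_pow 2
  refine (hnum.fun_div hden (pow_ne_zero 2 hx)).congr_deriv ?_
  field_simp
  ring

lemma norm_four_mul_mul_div_add_two_mul_cube_le {c y : ℝ} (hc : 0 < c) (hy : 0 < y) :
    ‖4 * y * c / (c + 2 * y) ^ 3‖ ≤ 2 * (1 / c) := by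
  rw [norm_of_nonneg (by positivity), mul_one_div, div_le_div_iff₀ (by positivity) hc]
  nlinarith [mul_pos (mul_pos hc hc) hy, pow_pos hc 3, mul_pos hc (mul_pos hy hy), pow_pos hy 3]

lemma deriv_sqrt_div_sqrt {f : ℝ → ℝ} {f' x : ℝ} (hf : HasDerivAt f f' x) (hx : 0 < f x) :
    deriv (fun y => √(f y)) x / √(f x) = f' / (2 * f x) := by
  rw [(hf.sqrt hx.ne').deriv, div_div, mul_assoc, mul_self_sqrt hx.le]

section

variable {ι : Type*} {b : ι → ℝ}

lemma summable_one_div_add_two_mul (hb : ∀ i, 0 < b i) (hsum : Summable fun i => 1 / b i)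
    {θ : ℝ} (hθ : 0 ≤ θ) : Summable fun i => 1 / (b i + 2 * θ) :=
  hsum.of_nonneg_of_le (fun i => by have := hb i; positivity)
    (fun i => one_div_le_one_div_of_le (hb i) (by linarith))

lemma summable_one_div_add_two_mul_sq (hb : ∀ i, 0 < b i) (hsum : Summable fun i => 1 / b i)
    {u : ℝ} (hu : 0 < u) : Summable fun i => 1 / (b i + 2 * u) ^ 2 := by
  refine (hsum.mul_left (1 / (8 * u))).of_nonneg_of_le (fun i => by have := hb i; positivity)
    (fun i => ?_)
  have hbi := hb i
  rw [one_div_mul_one_div, one_div_le_one_div (by positivity) (by positivity)]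
  nlinarith [sq_nonneg (b i - 2 * u)]

lemma summable_div_add_two_mul_cube (hb : ∀ i, 0 < b i) (hsum : Summable fun i => 1 / b i)
    {u : ℝ} (hu : 0 < u) : Summable fun i => b i / (b i + 2 * u) ^ 3 := by
  refine (summable_one_div_add_two_mul_sq hb hsum hu).of_nonneg_of_le
    (fun i => by have := hb i; positivity) (fun i => ?_)
  have hbi := hb i
  rw [div_le_div_iff₀ (by positivity) (by positivity)]
  nlinarith [pow_pos (show 0 < b i + 2 * u by positivity) 2]

lemma hasDerivAt_tsum_two_mul_sq_div_add_two_mul_sq (hb : ∀ i, 0 < b i)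
    (hsum : Summable fun i => 1 / b i) {u : ℝ} (hu : 0 < u) :
    HasDerivAt (fun x => ∑' i, 2 * x ^ 2 / (b i + 2 * x) ^ 2)
      (4 * u * ∑' i, b i / (b i + 2 * u) ^ 3) u := by
  have hsum_u : Summable fun i => 2 * u ^ 2 / (b i + 2 * u) ^ 2 := by
    simpa only [mul_one_div] using
      (summable_one_div_add_two_mul_sq hb hsum hu).mul_left (2 * u ^ 2)
  have h := hasDerivAt_tsum_of_isPreconnected (hsum.mul_left 2) isOpen_Ioi
    (convex_Ioi (0 : ℝ)).isPreconnected
    (fun i y (hy : 0 < y) => hasDerivAt_two_mul_sq_div_add_two_mul_sq (by linarith [hb i]))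
    (fun i y (hy : 0 < y) => norm_four_mul_mul_div_add_two_mul_cube_le (hb i) hy) hu hsum_u hu
  simpa only [← tsum_mul_left, mul_div_assoc] using h

lemma tsum_two_mul_sq_div_add_two_mul_sq (u : ℝ) :
    ∑' i, 2 * u ^ 2 / (b i + 2 * u) ^ 2 = 2 * u ^ 2 * ∑' i, 1 / (b i + 2 * u) ^ 2 := by
  simp only [← tsum_mul_left, mul_one_div]

variable [Nonempty ι]

lemma tsum_one_div_add_two_mul_sq_pos (hb : ∀ i, 0 < b i) (hsum : Summable fun i => 1 / b i)
    {u : ℝ} (hu : 0 < u) : 0 < ∑' i, 1 / (b i + 2 * u) ^ 2 := by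
  obtain ⟨i⟩ := ‹Nonempty ι›
  exact (summable_one_div_add_two_mul_sq hb hsum hu).tsum_pos
    (fun j => by have := hb j; positivity) i (by have := hb i; positivity)

lemma tsum_div_add_two_mul_cube_pos (hb : ∀ i, 0 < b i) (hsum : Summable fun i => 1 / b i)
    {u : ℝ} (hu : 0 < u) : 0 < ∑' i, b i / (b i + 2 * u) ^ 3 := by
  obtain ⟨i⟩ := ‹Nonempty ι›
  exact (summable_div_add_two_mul_cube hb hsum hu).tsum_pos
    (fun j => by have := hb j; positivity) i (by have := hb i; positivity)

lemma strictAntiOn_tsum_one_div_add_two_mul (hb : ∀ i, 0 < b i)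
    (hsum : Summable fun i => 1 / b i) :
    StrictAntiOn (fun θ => ∑' i, 1 / (b i + 2 * θ)) (Ici 0) := by
  intro θ₁ (hθ₁ : 0 ≤ θ₁) θ₂ (hθ₂ : 0 ≤ θ₂) hlt
  obtain ⟨i⟩ := ‹Nonempty ι›
  refine Summable.tsum_lt_tsum (i := i) (fun j => ?_) ?_
    (summable_one_div_add_two_mul hb hsum hθ₂) (summable_one_div_add_two_mul hb hsum hθ₁)
  · exact one_div_le_one_div_of_le (by linarith [hb j]) (by linarith)
  · exact one_div_lt_one_div_of_lt (by linarith [hb i]) (by linarith)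

lemma strictMonoOn_tsum_two_mul_sq_div_add_two_mul_sq (hb : ∀ i, 0 < b i)
    (hsum : Summable fun i => 1 / b i) :
    StrictMonoOn (fun u => ∑' i, 2 * u ^ 2 / (b i + 2 * u) ^ 2) (Ioi 0) := by
  have hderiv := fun u (hu : 0 < u) => hasDerivAt_tsum_two_mul_sq_div_add_two_mul_sq hb hsum hu
  refine strictMonoOn_of_deriv_pos (convex_Ioi 0)
    (fun u hu => (hderiv u hu).continuousAt.continuousWithinAt) (fun u hu => ?_)
  rw [interior_Ioi] at hu
  rw [(hderiv u hu).deriv]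
  exact mul_pos (mul_pos four_pos hu) (tsum_div_add_two_mul_cube_pos hb hsum hu)

end

theorem psi_logDeriv_and_monotone_general (a : ℕ → ℝ) (hapos : ∀ i, 0 < a i)
    (hasum : Summable (fun i => 1 / (a i) ^ 2))
    (ψ μ μInv : ℝ → ℝ)
    (hψ : ∀ u : ℝ, ψ u = Real.sqrt (∑' i : ℕ, 2 * u ^ 2 / ((a i) ^ 2 + 2 * u) ^ 2))
    (hμ : ∀ θ : ℝ, μ θ = ∑' i : ℕ, 1 / ((a i) ^ 2 + 2 * θ))
    (hμInv : ∀ θ > (0 : ℝ), μInv (μ θ) = θ) :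
    (∀ u > (0 : ℝ),
      deriv ψ u / ψ u =
        (1 / u) *
          ((∑' i : ℕ, (a i) ^ 2 / ((a i) ^ 2 + 2 * u) ^ 3) /
            (∑' i : ℕ, 1 / ((a i) ^ 2 + 2 * u) ^ 2))) ∧
    StrictMonoOn ψ (Set.Ioi 0) ∧
    StrictAntiOn (fun s => ψ (μInv s)) (μ '' Set.Ioi 0) := by
  obtain rfl : ψ = _ := funext hψ
  obtain rfl : μ = _ := funext hμ
  have hb : ∀ i, 0 < a i ^ 2 := fun i => pow_pos (hapos i) 2
  have hmono : StrictMonoOn (fun u => √(∑' i, 2 * u ^ 2 / (a i ^ 2 + 2 * u) ^ 2)) (Ioi 0) :=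
    fun x hx y hy hxy => sqrt_lt_sqrt (by positivity)
      (strictMonoOn_tsum_two_mul_sq_div_add_two_mul_sq hb hasum hx hy hxy)
  refine ⟨fun u hu => ?_, hmono, hmono.comp_leftInvOn_strictAntiOn
    ((strictAntiOn_tsum_one_div_add_two_mul hb hasum).mono Ioi_subset_Ici_self) hμInv⟩
  have hT := tsum_one_div_add_two_mul_sq_pos hb hasum hu
  have hS : 0 < ∑' i, 2 * u ^ 2 / (a i ^ 2 + 2 * u) ^ 2 := by
    rw [tsum_two_mul_sq_div_add_two_mul_sq]
    exact mul_pos (by positivity) hT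
  rw [deriv_sqrt_div_sqrt (hasDerivAt_tsum_two_mul_sq_div_add_two_mul_sq hb hasum hu) hS,
    tsum_two_mul_sq_div_add_two_mul_sq]
  field_simp
  ring

/-- Let `(aᵢ)` be nondecreasing positive with `Σᵢ 1/aᵢ² < ∞`, and let
`ψ u = √(Σᵢ 2u²/(aᵢ²+2u)²)`, `μ θ = Σᵢ 1/(aᵢ²+2θ)`.  Then for every `u > 0`,
`ψ' u / ψ u = (1/u) * (Σᵢ aᵢ²/(aᵢ²+2u)³) / (Σᵢ 1/(aᵢ²+2u)²)`; consequently `ψ` is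
increasing on `(0,∞)` and `ψ ∘ μ⁻¹` is decreasing (on the range of `μ`). -/
theorem psi_logDeriv_and_monotone (a : ℕ → ℝ) (hapos : ∀ i, 0 < a i)
    (hamono : Monotone a) (hasum : Summable (fun i => 1 / (a i) ^ 2))
    (ψ μ μInv : ℝ → ℝ)
    (hψ : ∀ u : ℝ, ψ u = Real.sqrt (∑' i : ℕ, 2 * u ^ 2 / ((a i) ^ 2 + 2 * u) ^ 2))
    (hμ : ∀ θ : ℝ, μ θ = ∑' i : ℕ, 1 / ((a i) ^ 2 + 2 * θ))
    (hμInv : ∀ θ > (0 : ℝ), μInv (μ θ) = θ) :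
    (∀ u > (0 : ℝ),
      deriv ψ u / ψ u =
        (1 / u) *
          ((∑' i : ℕ, (a i) ^ 2 / ((a i) ^ 2 + 2 * u) ^ 3) /
            (∑' i : ℕ, 1 / ((a i) ^ 2 + 2 * u) ^ 2))) ∧
    StrictMonoOn ψ (Set.Ioi 0) ∧
    StrictAntiOn (fun s => ψ (μInv s)) (μ '' Set.Ioi 0) :=
  psi_logDeriv_and_monotone_general a hapos hasum ψ μ μInv hψ hμ hμInv
end

section
/- Let (aᵢ)_{i≥1} be a nondecreasing sequence of positive reals with Σᵢ 1/aᵢ² < ∞ (in particular aᵢ → ∞), and define μ(θ) = Σᵢ 1/(aᵢ²+2θ) for θ > 0. Then θ·μ(θ) → +∞ as θ → +∞. Moreover θ·μ(θ) ≥ N(θ)/3 where N(θ) = sup{i : aᵢ² ≤ θ}. -/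
open Filter Set Real

/-- Let `(aᵢ)_{i ≥ 1}` be nondecreasing positive with `Σᵢ 1/aᵢ² < ∞`, and
`μ θ = Σᵢ 1/(aᵢ²+2θ)`.  Then `θ * μ θ → +∞` as `θ → +∞`; moreover
`θ * μ θ ≥ N θ / 3` where `N θ = #{i : aᵢ² ≤ θ}`. -/
theorem theta_mul_mu_tendsto_atTop (a : ℕ → ℝ) (hapos : ∀ i, 0 < a i)
    (hamono : Monotone a) (hasum : Summable (fun i => 1 / (a i) ^ 2)) :
    Tendsto (fun θ : ℝ => θ * ∑' i : ℕ, 1 / ((a i) ^ 2 + 2 * θ)) atTop atTop ∧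
    ∀ θ > (0 : ℝ),
      (Nat.card {i : ℕ | (a i) ^ 2 ≤ θ} : ℝ) / 3 ≤
        θ * ∑' i : ℕ, 1 / ((a i) ^ 2 + 2 * θ) := by
  have hsum' : ∀ θ : ℝ, 0 < θ → Summable (fun i => 1 / ((a i) ^ 2 + 2 * θ)) := by
    intro θ hθ
    apply hasum.of_nonneg_of_le
    · intro i
      have := hapos i
      positivity
    · intro i
      have := hapos i
      apply one_div_le_one_div_of_le (by positivity)
      nlinarith
  have hfin : ∀ θ : ℝ, 0 < θ → {i : ℕ | (a i) ^ 2 ≤ θ}.Finite := by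
    intro θ hθ
    have h0 : Tendsto (fun i => 1 / (a i) ^ 2) atTop (nhds 0) := hasum.tendsto_atTop_zero
    have hev : ∀ᶠ i in atTop, 1 / (a i) ^ 2 < 1 / θ :=
      h0.eventually_lt_const (by positivity)
    obtain ⟨N, hN⟩ := eventually_atTop.1 hev
    apply Set.Finite.subset (Set.finite_Iio N)
    intro i hi
    simp only [Set.mem_setOf_eq] at hi
    by_contra h
    have h2 := hN i (by simpa using h)
    have hai := hapos i
    rw [div_lt_div_iff₀ (by positivity) hθ] at h2
    nlinarith
  have key : ∀ θ > (0 : ℝ),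
      (Nat.card {i : ℕ | (a i) ^ 2 ≤ θ} : ℝ) / 3 ≤
        θ * ∑' i : ℕ, 1 / ((a i) ^ 2 + 2 * θ) := by
    intro θ hθ
    have hf := hfin θ hθ
    have hcard : (Nat.card {i : ℕ | (a i) ^ 2 ≤ θ} : ℝ) = hf.toFinset.card := by
      rw [Nat.card_coe_set_eq, Set.ncard_eq_toFinset_card _ hf]
    rw [hcard]
    have h1 : (hf.toFinset.card : ℝ) * (1 / (3 * θ)) ≤
        ∑ i ∈ hf.toFinset, 1 / ((a i) ^ 2 + 2 * θ) := by
      have := Finset.card_nsmul_le_sum hf.toFinset (fun i => 1 / ((a i) ^ 2 + 2 * θ))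
        (1 / (3 * θ)) ?_
      · simpa [nsmul_eq_mul] using this
      · intro i hi
        rw [Set.Finite.mem_toFinset] at hi
        simp only [Set.mem_setOf_eq] at hi
        have := hapos i
        apply one_div_le_one_div_of_le (by positivity)
        linarith
    have h2 : ∑ i ∈ hf.toFinset, 1 / ((a i) ^ 2 + 2 * θ) ≤
        ∑' i : ℕ, 1 / ((a i) ^ 2 + 2 * θ) := by
      apply Summable.sum_le_tsum _ (fun i _ => by have := hapos i; positivity) (hsum' θ hθ)
    calc (hf.toFinset.card : ℝ) / 3 = θ * ((hf.toFinset.card : ℝ) * (1 / (3 * θ))) := by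
          field_simp
      _ ≤ θ * ∑ i ∈ hf.toFinset, 1 / ((a i) ^ 2 + 2 * θ) :=
          mul_le_mul_of_nonneg_left h1 hθ.le
      _ ≤ θ * ∑' i : ℕ, 1 / ((a i) ^ 2 + 2 * θ) :=
          mul_le_mul_of_nonneg_left h2 hθ.le
  refine ⟨?_, key⟩
  rw [tendsto_atTop]
  intro b
  set n := ⌈3 * b⌉₊ with hn
  filter_upwards [eventually_ge_atTop (max ((a n) ^ 2) 1)] with θ hθ
  have hθ1 : (0 : ℝ) < θ := lt_of_lt_of_le one_pos ((le_max_right _ _).trans hθ)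
  have hsub : Finset.range (n + 1) ⊆ (hfin θ hθ1).toFinset := by
    intro i hi
    rw [Finset.mem_range] at hi
    rw [Set.Finite.mem_toFinset]
    have h1 : a i ≤ a n := hamono (Nat.lt_succ_iff.1 hi)
    have h2 : (a i) ^ 2 ≤ (a n) ^ 2 := by nlinarith [hapos i, hapos n]
    exact h2.trans ((le_max_left _ _).trans hθ)
  have hcard : (n : ℝ) + 1 ≤ (Nat.card {i : ℕ | (a i) ^ 2 ≤ θ} : ℝ) := by
    have := Finset.card_le_card hsub
    rw [Finset.card_range] at this
    have hc : (Nat.card {i : ℕ | (a i) ^ 2 ≤ θ}) = (hfin θ hθ1).toFinset.card := by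
      rw [Nat.card_coe_set_eq, Set.ncard_eq_toFinset_card _ (hfin θ hθ1)]
    rw [hc]
    exact_mod_cast this
  have hb : b ≤ ((n : ℝ) + 1) / 3 := by
    have := Nat.le_ceil (3 * b)
    rw [← hn] at this
    linarith
  have := key θ hθ1
  linarith
end

section
/- Let (aᵢ)_{i≥1} be a nondecreasing sequence of positive reals with Σᵢ 1/aᵢ² < ∞, define μ(θ) = Σᵢ 1/(aᵢ²+2θ) and ψ(θ) = √(Σᵢ 2θ²/(aᵢ²+2θ)²) for θ > 0, let μ⁻¹ be the inverse of μ, and set ρ(s) = 1/μ⁻¹(s). Then for every x ∈ ℝ, ψ(μ⁻¹(s)) / ψ(μ⁻¹(s + x·ρ(s))) → 1 as s → 0⁺. -/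
open Filter Set Real
open scoped Topology

/-!
Write `S = ψ²`, `θ = μ⁻¹ s` and `θ' = μ⁻¹ (s + x / θ)`. Comparing the series term by term,
`ψ θ / ψ θ'` lies between `1` and `θ / θ'` (this is `θ ψ' / ψ ≤ 1` together with the monotonicity
of `ψ`). Since `S = -θ² μ'`, the same comparison bounds `|μ θ - μ θ'|` from below, which gives
`min (θ / θ') (θ' / θ) ≥ 1 - θ |μ θ - μ θ'| / S θ = 1 - |x| / S θ`. Finally `θ → ∞` as `s → 0⁺`,
and then `S θ → ∞` because each of its infinitely many terms tends to `1 / 2`.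
-/

theorem tendsto_tsum_atTop_of_forall_eventually_le {ι α : Type*} [Infinite ι] {l : Filter α}
    {f : α → ι → ℝ} {c : ℝ} (hc : 0 < c) (hf : ∀ᶠ x in l, 0 ≤ f x)
    (hs : ∀ᶠ x in l, Summable (f x)) (hle : ∀ i, ∀ᶠ x in l, c ≤ f x i) :
    Tendsto (fun x => ∑' i, f x i) l atTop := by
  refine tendsto_atTop.2 fun C => ?_
  obtain ⟨n, hn⟩ := exists_nat_ge (C / c)
  obtain ⟨s, rfl⟩ := Infinite.exists_subset_card_eq ι n
  filter_upwards [hf, hs, s.eventually_all.2 fun i _ => hle i] with x hfx hsx hcx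
  calc C ≤ s.card • c := by rw [nsmul_eq_mul]; exact (div_le_iff₀ hc).1 hn
    _ ≤ ∑ i ∈ s, f x i := s.card_nsmul_le_sum _ c hcx
    _ ≤ ∑' i, f x i := hsx.sum_le_tsum s fun i _ => hfx i

theorem tendsto_atTop_of_antitoneOn_of_eventually_apply_eq {μ g : ℝ → ℝ}
    (hanti : AntitoneOn μ (Ioi 0)) (hpos : ∀ θ, 0 < θ → 0 < μ θ)
    (hg : ∀ᶠ s in 𝓝[>] 0, 0 < g s ∧ μ (g s) = s) : Tendsto g (𝓝[>] 0) atTop := by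
  refine tendsto_atTop.2 fun M => ?_
  have hM : 0 < max M 1 := lt_max_of_lt_right one_pos
  filter_upwards [hg, Ioo_mem_nhdsGT (hpos _ hM)] with s ⟨hgs, hμgs⟩ hs
  by_contra! hgM
  have := hanti hgs hM (hgM.le.trans (le_max_left M 1))
  linarith [hs.2]

theorem tendsto_add_mul_one_div_nhdsGT_zero {g : ℝ → ℝ} (x : ℝ)
    (hg : Tendsto g (𝓝[>] 0) atTop) (hx : ∀ᶠ s in 𝓝[>] 0, |x| < s * g s) :
    Tendsto (fun s => s + x * (1 / g s)) (𝓝[>] 0) (𝓝[>] 0) := by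
  refine tendsto_nhdsWithin_iff.2 ⟨?_, ?_⟩
  · simpa using (tendsto_nhdsWithin_of_tendsto_nhds tendsto_id).add
      ((tendsto_inv_atTop_zero.comp hg).const_mul x)
  · filter_upwards [self_mem_nhdsWithin, hx] with s (hs : 0 < s) hxs
    have hgs : 0 < g s := pos_of_mul_pos_right ((abs_nonneg x).trans_lt hxs) hs.le
    have : |x / g s| < s := by rwa [abs_div, abs_of_pos hgs, div_lt_iff₀ hgs]
    rw [mem_Ioi, mul_one_div]
    linarith [neg_abs_le (x / g s)]

section Terms

variable {b u v θ : ℝ}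

theorem psi_term_le_mul_mu_term (hb : 0 ≤ b) (hθ : 0 < θ) :
    2 * θ ^ 2 / (b + 2 * θ) ^ 2 ≤ θ * (1 / (b + 2 * θ)) := by
  have hbθ : 0 < b + 2 * θ := by linarith
  rw [mul_one_div, div_le_div_iff₀ (by positivity) hbθ]
  nlinarith [mul_nonneg (mul_nonneg hb hθ.le) hbθ.le]

theorem psi_term_le_psi_term (hb : 0 ≤ b) (hu : 0 < u) (huv : u ≤ v) :
    2 * u ^ 2 / (b + 2 * u) ^ 2 ≤ 2 * v ^ 2 / (b + 2 * v) ^ 2 := by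
  have hv := hu.trans_le huv
  rw [div_le_div_iff₀ (by positivity) (by positivity)]
  nlinarith [mul_nonneg (mul_nonneg (sub_nonneg.2 huv) hb) (mul_pos hu hv).le,
    mul_nonneg (mul_nonneg (sub_nonneg.2 huv) hb) hb]

theorem psi_term_le_sq_div_mul_psi_term (hb : 0 ≤ b) (hu : 0 < u) (huv : u ≤ v) :
    2 * v ^ 2 / (b + 2 * v) ^ 2 ≤ (v / u) ^ 2 * (2 * u ^ 2 / (b + 2 * u) ^ 2) :=
  calc 2 * v ^ 2 / (b + 2 * v) ^ 2 ≤ 2 * v ^ 2 / (b + 2 * u) ^ 2 := by gcongr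
    _ = (v / u) ^ 2 * (2 * u ^ 2 / (b + 2 * u) ^ 2) := by field_simp

theorem one_sub_div_mul_psi_term_le_left (hb : 0 ≤ b) (hu : 0 < u) (huv : u ≤ v) :
    (1 - u / v) * (2 * u ^ 2 / (b + 2 * u) ^ 2) ≤ u * (1 / (b + 2 * u) - 1 / (b + 2 * v)) := by
  have hv := hu.trans_le huv
  rw [one_sub_div hv.ne', div_sub_div _ _ (by positivity) (by positivity)]
  rw [div_mul_div_comm, mul_div_assoc', div_le_div_iff₀ (by positivity) (by positivity)]
  have hvu := sub_nonneg.2 huv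
  nlinarith [mul_nonneg (mul_nonneg (mul_nonneg hu.le hvu) (by positivity : 0 ≤ b + 2 * u))
    (mul_nonneg hvu hb)]

theorem one_sub_div_mul_psi_term_le_right (hb : 0 ≤ b) (hu : 0 < u) (huv : u ≤ v) :
    (1 - u / v) * (2 * v ^ 2 / (b + 2 * v) ^ 2) ≤ v * (1 / (b + 2 * u) - 1 / (b + 2 * v)) := by
  have hv := hu.trans_le huv
  rw [one_sub_div hv.ne', div_sub_div _ _ (by positivity) (by positivity)]
  rw [div_mul_div_comm, mul_div_assoc', div_le_div_iff₀ (by positivity) (by positivity)]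
  have hvu := sub_nonneg.2 huv
  nlinarith [mul_nonneg (mul_nonneg (mul_nonneg (sq_nonneg v) hvu) (by positivity : 0 ≤ b + 2 * v))
    hvu]

theorem two_ninths_le_psi_term (hθ : 0 < θ) (hbθ : b ≤ θ) (hb : 0 ≤ b) :
    2 / 9 ≤ 2 * θ ^ 2 / (b + 2 * θ) ^ 2 := by
  rw [div_le_div_iff₀ (by norm_num) (by positivity)]
  nlinarith

end Terms

noncomputable def muSum (a : ℕ → ℝ) (θ : ℝ) : ℝ := ∑' i, 1 / (a i ^ 2 + 2 * θ)

noncomputable def psiSq (a : ℕ → ℝ) (θ : ℝ) : ℝ := ∑' i, 2 * θ ^ 2 / (a i ^ 2 + 2 * θ) ^ 2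

section Sums

variable {a : ℕ → ℝ} {u v θ θ' : ℝ}

theorem summable_mu_terms (hapos : ∀ i, 0 < a i) (hasum : Summable fun i => 1 / a i ^ 2)
    (hθ : 0 < θ) : Summable fun i => 1 / (a i ^ 2 + 2 * θ) :=
  hasum.of_nonneg_of_le (fun i => by positivity) fun i =>
    one_div_le_one_div_of_le (by have := hapos i; positivity) (by linarith)

theorem summable_psi_terms (hapos : ∀ i, 0 < a i) (hasum : Summable fun i => 1 / a i ^ 2)
    (hθ : 0 < θ) : Summable fun i => 2 * θ ^ 2 / (a i ^ 2 + 2 * θ) ^ 2 :=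
  ((summable_mu_terms hapos hasum hθ).mul_left θ).of_nonneg_of_le (fun i => by positivity)
    fun i => psi_term_le_mul_mu_term (sq_nonneg _) hθ

theorem psiSq_le_mul_muSum (hapos : ∀ i, 0 < a i) (hasum : Summable fun i => 1 / a i ^ 2)
    (hθ : 0 < θ) : psiSq a θ ≤ θ * muSum a θ := by
  rw [psiSq, muSum, ← tsum_mul_left]
  exact (summable_psi_terms hapos hasum hθ).tsum_le_tsum
    (fun i => psi_term_le_mul_mu_term (sq_nonneg _) hθ)
    ((summable_mu_terms hapos hasum hθ).mul_left θ)

theorem muSum_pos (hapos : ∀ i, 0 < a i) (hasum : Summable fun i => 1 / a i ^ 2)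
    (hθ : 0 < θ) : 0 < muSum a θ :=
  (summable_mu_terms hapos hasum hθ).tsum_pos (fun i => by positivity) 0 (by positivity)

theorem psiSq_pos (hapos : ∀ i, 0 < a i) (hasum : Summable fun i => 1 / a i ^ 2)
    (hθ : 0 < θ) : 0 < psiSq a θ :=
  (summable_psi_terms hapos hasum hθ).tsum_pos (fun i => by positivity) 0 (by positivity)

theorem muSum_antitoneOn (hapos : ∀ i, 0 < a i) (hasum : Summable fun i => 1 / a i ^ 2) :
    AntitoneOn (muSum a) (Ioi 0) := fun u (hu : 0 < u) v (hv : 0 < v) huv =>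
  (summable_mu_terms hapos hasum hv).tsum_le_tsum
    (fun i => one_div_le_one_div_of_le (by positivity) (by linarith))
    (summable_mu_terms hapos hasum hu)

theorem psiSq_monotoneOn (hapos : ∀ i, 0 < a i) (hasum : Summable fun i => 1 / a i ^ 2) :
    MonotoneOn (psiSq a) (Ioi 0) := fun _ hu _ hv huv =>
  (summable_psi_terms hapos hasum hu).tsum_le_tsum
    (fun _ => psi_term_le_psi_term (sq_nonneg _) hu huv) (summable_psi_terms hapos hasum hv)

theorem psiSq_le_sq_div_mul_psiSq (hapos : ∀ i, 0 < a i) (hasum : Summable fun i => 1 / a i ^ 2)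
    (hu : 0 < u) (huv : u ≤ v) : psiSq a v ≤ (v / u) ^ 2 * psiSq a u := by
  rw [psiSq, psiSq, ← tsum_mul_left]
  exact (summable_psi_terms hapos hasum (hu.trans_le huv)).tsum_le_tsum
    (fun i => psi_term_le_sq_div_mul_psi_term (sq_nonneg _) hu huv)
    ((summable_psi_terms hapos hasum hu).mul_left _)

theorem mul_psiSq_le_mul_muSum_sub (hapos : ∀ i, 0 < a i)
    (hasum : Summable fun i => 1 / a i ^ 2) {c w : ℝ} (hu : 0 < u) (hv : 0 < v) (hw : 0 < w)
    (hterm : ∀ b, 0 ≤ b →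
      c * (2 * w ^ 2 / (b + 2 * w) ^ 2) ≤ w * (1 / (b + 2 * u) - 1 / (b + 2 * v))) :
    c * psiSq a w ≤ w * (muSum a u - muSum a v) := by
  have hμu := summable_mu_terms hapos hasum hu
  have hμv := summable_mu_terms hapos hasum hv
  rw [psiSq, muSum, muSum, ← hμu.tsum_sub hμv, ← tsum_mul_left, ← tsum_mul_left]
  exact ((summable_psi_terms hapos hasum hw).mul_left c).tsum_le_tsum
    (fun i => hterm _ (sq_nonneg _)) ((hμu.sub hμv).mul_left w)

theorem one_sub_div_mul_psiSq_le_left (hapos : ∀ i, 0 < a i)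
    (hasum : Summable fun i => 1 / a i ^ 2) (hu : 0 < u) (huv : u ≤ v) :
    (1 - u / v) * psiSq a u ≤ u * (muSum a u - muSum a v) :=
  mul_psiSq_le_mul_muSum_sub hapos hasum hu (hu.trans_le huv) hu
    fun _ hb => one_sub_div_mul_psi_term_le_left hb hu huv

theorem one_sub_div_mul_psiSq_le_right (hapos : ∀ i, 0 < a i)
    (hasum : Summable fun i => 1 / a i ^ 2) (hu : 0 < u) (huv : u ≤ v) :
    (1 - u / v) * psiSq a v ≤ v * (muSum a u - muSum a v) :=
  mul_psiSq_le_mul_muSum_sub hapos hasum hu (hu.trans_le huv) (hu.trans_le huv)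
    fun _ hb => one_sub_div_mul_psi_term_le_right hb hu huv

theorem tendsto_psiSq_atTop (hapos : ∀ i, 0 < a i) (hasum : Summable fun i => 1 / a i ^ 2) :
    Tendsto (psiSq a) atTop atTop :=
  tendsto_tsum_atTop_of_forall_eventually_le (c := 2 / 9) (by norm_num)
    (Eventually.of_forall fun _ _ => by positivity)
    ((eventually_gt_atTop 0).mono fun θ hθ => summable_psi_terms hapos hasum hθ)
    fun i => (eventually_gt_atTop 0).and (eventually_ge_atTop (a i ^ 2)) |>.mono
      fun θ ⟨hθ, hbθ⟩ => two_ninths_le_psi_term hθ hbθ (sq_nonneg _)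

theorem sqrt_psiSq_div_mem_Icc (hapos : ∀ i, 0 < a i) (hasum : Summable fun i => 1 / a i ^ 2)
    (hu : 0 < u) (huv : u ≤ v) : √(psiSq a v) / √(psiSq a u) ∈ Icc 1 (v / u) := by
  have hSu := sqrt_pos.2 (psiSq_pos hapos hasum hu)
  refine ⟨(one_le_div hSu).2 (sqrt_le_sqrt
    (psiSq_monotoneOn hapos hasum hu (hu.trans_le huv) huv)), (div_le_iff₀ hSu).2 ?_⟩
  calc √(psiSq a v) ≤ √((v / u) ^ 2 * psiSq a u) :=
        sqrt_le_sqrt (psiSq_le_sq_div_mul_psiSq hapos hasum hu huv)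
    _ = v / u * √(psiSq a u) := by
        rw [sqrt_mul (by positivity), sqrt_sq (div_pos (hu.trans_le huv) hu).le]

theorem sqrt_psiSq_div_mem_uIcc (hapos : ∀ i, 0 < a i) (hasum : Summable fun i => 1 / a i ^ 2)
    (hθ : 0 < θ) (hθ' : 0 < θ') : √(psiSq a θ) / √(psiSq a θ') ∈ uIcc 1 (θ / θ') := by
  rcases le_total θ' θ with h | h
  · exact Icc_subset_uIcc (sqrt_psiSq_div_mem_Icc hapos hasum hθ' h)
  · obtain ⟨h1, h2⟩ := sqrt_psiSq_div_mem_Icc hapos hasum hθ h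
    rw [← inv_div (√(psiSq a θ')), ← inv_div θ']
    exact Icc_subset_uIcc' ⟨inv_anti₀ (zero_lt_one.trans_le h1) h2, inv_le_one_of_one_le₀ h1⟩

theorem one_sub_div_psiSq_le_div (hapos : ∀ i, 0 < a i) (hasum : Summable fun i => 1 / a i ^ 2)
    {d : ℝ} (hθ : 0 < θ) (hθ' : 0 < θ') (hd : θ * |muSum a θ - muSum a θ'| ≤ d) :
    1 - d / psiSq a θ ≤ θ / θ' ∧ 1 - d / psiSq a θ ≤ θ' / θ := by
  have hS := psiSq_pos hapos hasum hθ
  have hd0 : 0 ≤ d := (mul_nonneg hθ.le (abs_nonneg _)).trans hd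
  have of_one_le {r : ℝ} (hr : 1 ≤ r) : (1 - r) * psiSq a θ ≤ d :=
    (mul_nonpos_of_nonpos_of_nonneg (sub_nonpos.2 hr) hS.le).trans hd0
  rw [sub_le_comm, sub_le_comm (b := d / _), le_div_iff₀ hS, le_div_iff₀ hS]
  rcases le_total θ' θ with h | h
  · refine ⟨of_one_le ((one_le_div hθ').2 h), ?_⟩
    refine (one_sub_div_mul_psiSq_le_right hapos hasum hθ' h).trans (le_trans ?_ hd)
    exact mul_le_mul_of_nonneg_left (abs_sub_comm (muSum a θ) _ ▸ le_abs_self _) hθ.le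
  · refine ⟨(one_sub_div_mul_psiSq_le_left hapos hasum hθ h).trans (le_trans ?_ hd),
      of_one_le ((one_le_div hθ).2 h)⟩
    exact mul_le_mul_of_nonneg_left (le_abs_self _) hθ.le

theorem sqrt_psiSq_div_mem_Icc_one_sub (hapos : ∀ i, 0 < a i)
    (hasum : Summable fun i => 1 / a i ^ 2) {d : ℝ} (hθ : 0 < θ) (hθ' : 0 < θ')
    (hd : θ * |muSum a θ - muSum a θ'| ≤ d) (hdS : d < psiSq a θ) :
    √(psiSq a θ) / √(psiSq a θ') ∈ Icc (1 - d / psiSq a θ) (1 - d / psiSq a θ)⁻¹ := by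
  have hS := psiSq_pos hapos hasum hθ
  have hd0 : 0 ≤ d := (mul_nonneg hθ.le (abs_nonneg _)).trans hd
  have hL : 0 < 1 - d / psiSq a θ := sub_pos.2 ((div_lt_one hS).2 hdS)
  have hL1 : 1 - d / psiSq a θ ≤ 1 := sub_le_self _ (div_nonneg hd0 hS.le)
  obtain ⟨h, h'⟩ := one_sub_div_psiSq_le_div hapos hasum hθ hθ' hd
  refine uIcc_subset_Icc ⟨hL1, one_le_inv₀ hL |>.2 hL1⟩ ⟨h, ?_⟩
    (sqrt_psiSq_div_mem_uIcc hapos hasum hθ hθ')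
  rwa [le_inv_comm₀ (hL.trans_le h) hL, inv_div]

end Sums

theorem psi_ratio_tendsto_one_general (a : ℕ → ℝ) (hapos : ∀ i, 0 < a i)
    (hasum : Summable (fun i => 1 / (a i) ^ 2))
    (μ ψ μInv : ℝ → ℝ)
    (hμ : ∀ θ : ℝ, μ θ = ∑' i : ℕ, 1 / ((a i) ^ 2 + 2 * θ))
    (hψ : ∀ θ : ℝ, ψ θ = Real.sqrt (∑' i : ℕ, 2 * θ ^ 2 / ((a i) ^ 2 + 2 * θ) ^ 2))
    (hμInv : ∀ᶠ s in nhdsWithin (0 : ℝ) (Set.Ioi 0), 0 < μInv s ∧ μ (μInv s) = s) :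
    ∀ x : ℝ,
      Tendsto (fun s => ψ (μInv s) / ψ (μInv (s + x * (1 / μInv s))))
        (nhdsWithin 0 (Set.Ioi 0)) (nhds 1) := by
  intro x
  obtain rfl : μ = muSum a := funext hμ
  obtain rfl : ψ = fun θ => √(psiSq a θ) := funext hψ
  have hθ : Tendsto μInv (𝓝[>] 0) atTop :=
    tendsto_atTop_of_antitoneOn_of_eventually_apply_eq (muSum_antitoneOn hapos hasum)
      (fun _ => muSum_pos hapos hasum) hμInv
  have hS : Tendsto (fun s => psiSq a (μInv s)) (𝓝[>] 0) atTop :=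
    (tendsto_psiSq_atTop hapos hasum).comp hθ
  have hshift : Tendsto (fun s => s + x * (1 / μInv s)) (𝓝[>] 0) (𝓝[>] 0) := by
    refine tendsto_add_mul_one_div_nhdsGT_zero x hθ ?_
    filter_upwards [hμInv, hS.eventually_gt_atTop |x|] with s ⟨hθs, hμθs⟩ hSx
    linarith [hμθs ▸ psiSq_le_mul_muSum hapos hasum hθs]
  have hL : Tendsto (fun s => 1 - |x| / psiSq a (μInv s)) (𝓝[>] 0) (𝓝 1) := by
    simpa using tendsto_const_nhds.sub (tendsto_const_nhds.div_atTop hS)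
  have hbounds : ∀ᶠ s in 𝓝[>] 0,
      √(psiSq a (μInv s)) / √(psiSq a (μInv (s + x * (1 / μInv s)))) ∈
        Icc (1 - |x| / psiSq a (μInv s)) (1 - |x| / psiSq a (μInv s))⁻¹ := by
    filter_upwards [hμInv, hshift.eventually hμInv, hS.eventually_gt_atTop |x|]
      with s ⟨hθ, hμθ⟩ ⟨hθ', hμθ'⟩ hSx
    refine sqrt_psiSq_div_mem_Icc_one_sub hapos hasum hθ hθ' (le_of_eq ?_) hSx
    rw [hμθ, hμθ', sub_add_cancel_left, abs_neg, abs_mul, abs_of_pos (one_div_pos.2 hθ),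
      mul_one_div, mul_div_cancel₀ _ hθ.ne']
  exact tendsto_of_tendsto_of_tendsto_of_le_of_le' hL (by simpa using hL.inv₀ one_ne_zero)
    (hbounds.mono fun _ h => h.1) (hbounds.mono fun _ h => h.2)

/-- Let `(aᵢ)` be nondecreasing positive with `Σᵢ 1/aᵢ² < ∞`,
`μ θ = Σᵢ 1/(aᵢ²+2θ)`, `ψ θ = √(Σᵢ 2θ²/(aᵢ²+2θ)²)`, `μ⁻¹` the inverse of `μ`
(defined near `0⁺`) and `ρ s = 1/μ⁻¹ s`.  Then for every `x ∈ ℝ`,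
`ψ (μ⁻¹ s) / ψ (μ⁻¹ (s + x * ρ s)) → 1` as `s → 0⁺`. -/
theorem psi_ratio_tendsto_one (a : ℕ → ℝ) (hapos : ∀ i, 0 < a i)
    (hamono : Monotone a) (hasum : Summable (fun i => 1 / (a i) ^ 2))
    (μ ψ μInv : ℝ → ℝ)
    (hμ : ∀ θ : ℝ, μ θ = ∑' i : ℕ, 1 / ((a i) ^ 2 + 2 * θ))
    (hψ : ∀ θ : ℝ, ψ θ = Real.sqrt (∑' i : ℕ, 2 * θ ^ 2 / ((a i) ^ 2 + 2 * θ) ^ 2))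
    (hμInv : ∀ᶠ s in nhdsWithin (0 : ℝ) (Set.Ioi 0), 0 < μInv s ∧ μ (μInv s) = s) :
    ∀ x : ℝ,
      Tendsto (fun s => ψ (μInv s) / ψ (μInv (s + x * (1 / μInv s))))
        (nhdsWithin 0 (Set.Ioi 0)) (nhds 1) :=
  psi_ratio_tendsto_one_general a hapos hasum μ ψ μInv hμ hψ hμInv
end

section
/- Let ρ be a continuous nondecreasing nonnegative function near 0 with ρ(0)=0 that is regularly varying at 0 (with index d ≥ 1) and monotone in a right-neighborhood of 0. Define μ = (1/ρ)⁻¹ (the generalized inverse of the decreasing function 1/ρ), φ(t) = t·μ(t), and aᵢ² = φ⁻¹(i) for i ≥ 1. Then Σ_{i=1}^∞ 1/aᵢ² < ∞. -/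
open Filter Set Real Topology

/-! Write `s n = μ (φInv n)`. Then the `n`-th term is `ρ (s n)`, `n * ρ (s n) = s n`, and `s n → 0`.
Regular variation makes `ρ` doubling near `0`: `ρ (2 t) ≤ C ρ t`. Group the indices by the dyadic
shell `η / 2 ^ (k + 1) < s n ≤ η / 2 ^ k`. In shell `k` each term is at most
`ρ (η / 2 ^ k) ≤ C ρ (η / 2 ^ (k + 1))`, while
`n ≤ s n / ρ (s n) ≤ (η / 2 ^ k) / ρ (η / 2 ^ (k + 1))` bounds the number of terms, so shell `k` contributes at most `C η / 2 ^ k`. -/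

theorem summable_of_forall_fiber_sum_le {ι κ : Type*} {f : ι → ℝ} {c : κ → ℝ}
    (g : ι → κ) (hf : 0 ≤ f) (hc : Summable c)
    (hfiber : ∀ k (S : Finset ι), (∀ i ∈ S, g i = k) → ∑ i ∈ S, f i ≤ c k) :
    Summable f := by
  classical
  have hc_nonneg : ∀ k, 0 ≤ c k := fun k => by simpa using hfiber k ∅ (by simp)
  refine summable_of_sum_le (c := ∑' k, c k) hf fun S => ?_
  calc ∑ i ∈ S, f i = ∑ k ∈ S.image g, ∑ i ∈ S with g i = k, f i :=
        (Finset.sum_fiberwise_of_maps_to (fun i hi => Finset.mem_image_of_mem g hi) _).symm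
    _ ≤ ∑ k ∈ S.image g, c k :=
        Finset.sum_le_sum fun k _ => hfiber k _ fun i hi => (Finset.mem_filter.1 hi).2
    _ ≤ ∑' k, c k := hc.sum_le_tsum _ fun k _ => hc_nonneg k

theorem card_mul_le_of_forall_succ_mul_le {S : Finset ℕ} {r B : ℝ} (hr : 0 < r) (hB : 0 ≤ B)
    (h : ∀ n ∈ S, (n + 1) * r ≤ B) : S.card * r ≤ B := by
  have hsub : S ⊆ Finset.range ⌊B / r⌋₊ := fun n hn =>
    Finset.mem_range.2 <| Nat.lt_of_succ_le <| Nat.le_floor <| by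
      push_cast
      exact (le_div_iff₀ hr).2 (h n hn)
  have hcard : (S.card : ℝ) ≤ B / r := calc
    (S.card : ℝ) ≤ ⌊B / r⌋₊ := by
      exact_mod_cast (Finset.card_le_card hsub).trans (Finset.card_range _).le
    _ ≤ B / r := Nat.floor_le (div_nonneg hB hr.le)
  exact (le_div_iff₀ hr).1 hcard

theorem exists_pow_two_shell {s η : ℝ} (hs : 0 < s) (hsη : s ≤ η) :
    ∃ k : ℕ, η / 2 ^ (k + 1) < s ∧ s ≤ η / 2 ^ k := by
  obtain ⟨k, hle, hlt⟩ := exists_nat_pow_near ((one_le_div hs).2 hsη) one_lt_two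
  exact ⟨k, (div_lt_iff₀ (by positivity)).2 (by rwa [div_lt_iff₀ hs, mul_comm] at hlt),
    (le_div_iff₀ (by positivity)).2 (by rwa [le_div_iff₀ hs, mul_comm] at hle)⟩

theorem summable_comp_of_doubling {ρ : ℝ → ℝ} {η C : ℝ}
    (hmono : MonotoneOn ρ (Ioc 0 η)) (hpos : ∀ t ∈ Ioc 0 η, 0 < ρ t)
    (hdoubling : ∀ t ∈ Ioc 0 (η / 2), ρ (2 * t) ≤ C * ρ t)
    {s : ℕ → ℝ} (hs : ∀ n, s n ∈ Ioc 0 η) (hsρ : ∀ n, (n + 1) * ρ (s n) ≤ s n) :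
    Summable fun n => ρ (s n) := by
  have hη : 0 < η := (hs 0).1.trans_le (hs 0).2
  have hdyadic : ∀ j : ℕ, η / 2 ^ j ∈ Ioc 0 η := fun j =>
    ⟨by positivity, div_le_self hη.le (one_le_pow₀ one_le_two)⟩
  have hhalf : ∀ j : ℕ, η / 2 ^ (j + 1) ∈ Ioc 0 (η / 2) := fun j =>
    ⟨by positivity, by
      rw [pow_succ, ← div_div]
      exact div_le_div_of_nonneg_right (hdyadic j).2 zero_le_two⟩
  have hC : 0 < C := by
    have h := hdoubling (η / 2) ⟨half_pos hη, le_rfl⟩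
    rw [mul_div_cancel₀ η two_ne_zero] at h
    exact pos_of_mul_pos_left ((hpos η ⟨hη, le_rfl⟩).trans_le h)
      (hpos _ ⟨half_pos hη, half_le_self hη.le⟩).le
  choose k hk using fun n => exists_pow_two_shell (hs n).1 (hs n).2
  refine summable_of_forall_fiber_sum_le k (fun n => (hpos _ (hs n)).le)
    (summable_geometric_two.mul_left (C * η)) fun j S hS => ?_
  have hterm : ∀ n ∈ S, ρ (s n) ≤ C * ρ (η / 2 ^ (j + 1)) := fun n hn => calc
    ρ (s n) ≤ ρ (η / 2 ^ j) := hmono (hs n) (hdyadic j) (hS n hn ▸ (hk n).2)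
    _ = ρ (2 * (η / 2 ^ (j + 1))) := by rw [pow_succ]; field_simp
    _ ≤ C * ρ (η / 2 ^ (j + 1)) := hdoubling _ (hhalf j)
  have hcard : S.card * ρ (η / 2 ^ (j + 1)) ≤ η / 2 ^ j :=
    card_mul_le_of_forall_succ_mul_le (hpos _ (hdyadic _)) (hdyadic j).1.le fun n hn => calc
      (n + 1) * ρ (η / 2 ^ (j + 1)) ≤ (n + 1) * ρ (s n) :=
        mul_le_mul_of_nonneg_left (hmono (hdyadic _) (hs n) (hS n hn ▸ (hk n).1).le)
          (by positivity)
      _ ≤ s n := hsρ n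
      _ ≤ η / 2 ^ j := hS n hn ▸ (hk n).2
  calc ∑ n ∈ S, ρ (s n) ≤ S.card • (C * ρ (η / 2 ^ (j + 1))) :=
        Finset.sum_le_card_nsmul _ _ _ hterm
    _ = C * (S.card * ρ (η / 2 ^ (j + 1))) := by rw [nsmul_eq_mul]; ring
    _ ≤ C * (η / 2 ^ j) := mul_le_mul_of_nonneg_left hcard hC.le
    _ = C * η * (1 / 2) ^ j := by rw [one_div_pow]; ring

theorem exists_doubling_of_tendsto_ratio {ρ : ℝ → ℝ} {δ L : ℝ} (hδ : 0 < δ)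
    (hpos : ∀ t ∈ Ioo 0 δ, 0 < ρ t) (hL : Tendsto (fun t => ρ (2 * t) / ρ t) (𝓝[>] 0) (𝓝 L)) :
    ∃ η, 0 < η ∧ η < δ ∧ ∀ t ∈ Ioc 0 (η / 2), ρ (2 * t) ≤ (L + 1) * ρ t := by
  have hev : ∀ᶠ t in 𝓝[>] 0, 2 * t < δ ∧ ρ (2 * t) ≤ (L + 1) * ρ t := by
    filter_upwards [Ioo_mem_nhdsGT (half_pos hδ), hL.eventually_lt_const (lt_add_one L)]
      with t ht hlt
    have hρt := hpos t ⟨ht.1, ht.2.trans (half_lt_self hδ)⟩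
    exact ⟨by linarith [ht.2], ((div_lt_iff₀ hρt).1 hlt).le⟩
  obtain ⟨u, hu, hsub⟩ := mem_nhdsGT_iff_exists_Ioc_subset.1 hev
  refine ⟨2 * u, mul_pos two_pos hu, (hsub ⟨hu, le_rfl⟩).1, fun t ht => (hsub ?_).2⟩
  rwa [mul_div_cancel_left₀ u two_ne_zero] at ht

theorem summable_inv_sq_of_regularly_varying_auxiliary_general
    (ρ : ℝ → ℝ) (δ : ℝ) (hδ : 0 < δ)
    (hρmono : MonotoneOn ρ (Set.Ico 0 δ))
    (hρpos : ∀ s ∈ Set.Ioo (0 : ℝ) δ, 0 < ρ s)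
    (d : ℝ)
    (hreg : ∀ l > (0 : ℝ),
      Tendsto (fun t => ρ (l * t) / ρ t) (nhdsWithin 0 (Set.Ioi 0)) (nhds (l ^ d)))
    (μ : ℝ → ℝ) (hμ : ∀ᶠ t in atTop, 0 < μ t ∧ 1 / ρ (μ t) = t)
    (hμ0 : Tendsto μ atTop (nhdsWithin 0 (Set.Ioi 0)))
    (φInv : ℝ → ℝ)
    (hφInv : ∀ᶠ y in atTop, 0 < φInv y ∧ φInv y * μ (φInv y) = y)
    (hφInvTop : Tendsto φInv atTop atTop) :
    Summable (fun i : ℕ => 1 / φInv (i + 1)) := by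
  obtain ⟨η, hη, hηδ, hdoubling⟩ :=
    exists_doubling_of_tendsto_ratio hδ hρpos (hreg 2 two_pos)
  have hIoc : Ioc 0 η ⊆ Ioo 0 δ := fun t ht => ⟨ht.1, ht.2.trans_lt hηδ⟩
  have hseq : ∀ᶠ y in atTop, μ (φInv y) ∈ Ioc 0 η ∧ ρ (μ (φInv y)) = 1 / φInv y ∧
      y * ρ (μ (φInv y)) = μ (φInv y) := by
    filter_upwards [hφInvTop.eventually hμ, hφInv,
      hφInvTop.eventually (hμ0.eventually_mem (Ioc_mem_nhdsGT hη))]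
      with y ⟨_, hinv⟩ ⟨hpos, hy⟩ hmem
    have hρ : ρ (μ (φInv y)) = 1 / φInv y := by rw [← one_div_one_div (ρ _), hinv]
    refine ⟨hmem, hρ, ?_⟩
    rw [hρ, mul_one_div, div_eq_iff hpos.ne']
    linarith
  obtain ⟨N, hN⟩ := eventually_atTop.1 (tendsto_natCast_atTop_atTop.eventually hseq)
  have hshift : ∀ n : ℕ, μ (φInv (↑(n + N) + 1)) ∈ Ioc 0 η ∧
      ρ (μ (φInv (↑(n + N) + 1))) = 1 / φInv (↑(n + N) + 1) ∧
      (↑(n + N) + 1) * ρ (μ (φInv (↑(n + N) + 1))) = μ (φInv (↑(n + N) + 1)) := fun n =>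
    Nat.cast_succ (R := ℝ) (n + N) ▸ hN (n + N + 1) (by omega)
  rw [← summable_nat_add_iff N]
  refine (summable_comp_of_doubling (hρmono.mono fun t ht => Ioo_subset_Ico_self (hIoc ht))
    (fun t ht => hρpos t (hIoc ht)) hdoubling (fun n => (hshift n).1) fun n => ?_).congr
    fun n => (hshift n).2.1
  refine le_of_le_of_eq (mul_le_mul_of_nonneg_right ?_ (hρpos _ (hIoc (hshift n).1)).le)
    (hshift n).2.2
  push_cast
  linarith

/-- Summability lemma for the converse theorem : let `ρ` be continuous, nondecreasing,
nonnegative near `0` with `ρ 0 = 0`, regularly varying at `0` with index `d ≥ 1` and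
positive on a punctured right neighborhood of `0`.  Let `μ` be the (generalized) inverse
of the decreasing function `1/ρ`, `φ t = t * μ t`, `φ⁻¹` the (generalized) inverse of
`φ`, and set `aᵢ² = φ⁻¹ i` for `i ≥ 1`.  Then `Σ_{i ≥ 1} 1/aᵢ² < ∞`. -/
theorem summable_inv_sq_of_regularly_varying_auxiliary
    (ρ : ℝ → ℝ) (δ : ℝ) (hδ : 0 < δ)
    (hρcont : ContinuousOn ρ (Set.Ico 0 δ)) (hρmono : MonotoneOn ρ (Set.Ico 0 δ))
    (hρnonneg : ∀ s ∈ Set.Ico (0 : ℝ) δ, 0 ≤ ρ s) (hρ0 : ρ 0 = 0)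
    (hρpos : ∀ s ∈ Set.Ioo (0 : ℝ) δ, 0 < ρ s)
    (d : ℝ) (hd : 1 ≤ d)
    (hreg : ∀ l > (0 : ℝ),
      Tendsto (fun t => ρ (l * t) / ρ t) (nhdsWithin 0 (Set.Ioi 0)) (nhds (l ^ d)))
    (μ : ℝ → ℝ) (hμ : ∀ᶠ t in atTop, 0 < μ t ∧ 1 / ρ (μ t) = t)
    (hμ0 : Tendsto μ atTop (nhdsWithin 0 (Set.Ioi 0)))
    (φInv : ℝ → ℝ) (hφInvpos : ∀ i : ℕ, 0 < φInv (i + 1))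
    (hφInv : ∀ᶠ y in atTop, 0 < φInv y ∧ φInv y * μ (φInv y) = y)
    (hφInvTop : Tendsto φInv atTop atTop) :
    Summable (fun i : ℕ => 1 / φInv (i + 1)) :=
  summable_inv_sq_of_regularly_varying_auxiliary_general ρ δ hδ hρmono hρpos d hreg μ hμ hμ0 φInv
    hφInv hφInvTop
end
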